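/- arXiv:2206.10250 — 2 statements merged into one kernel-verified Lean document; each statement's English description precedes it below -/
import Mathlib

section
/- Let {Y_α}_{α∈J} be a covering of Y by subsets, totally ordered by inclusion, such that every compact subset of Y lies in some Y_α. Let Ỹ_α ⊆ Y_α be exhaustive subsets with Ỹ_α ⊆ Ỹ_β whenever Y_α ⊆ Y_β. If each Y_α is k-c-distinguished with respect to Ỹ_α (i.e. f restricted over Y_α is a k-c-quasifibration with respect to Ỹ_α), then f is a k-c-quasifibration with respect to ⋃_{α∈J} Ỹ_α. -/
open Set unitInterval

noncomputable section

/-- The `n`-cube. -/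
abbrev Cube (n : ℕ) := Fin n → unitInterval

/-- The part `J` of the boundary of the `(n+1)`-cube that is sent to the basepoint:
everything in the boundary except the (open) face `t 0 = 0`. -/
def inJ {n : ℕ} (t : Cube (n + 1)) : Prop :=
  ∃ i, t i = 1 ∨ (i ≠ 0 ∧ t i = 0)

/-- A representative of an element of the relative homotopy group
`π_{n+1}(X, A, x)`: a map of the `(n+1)`-cube sending the face `t 0 = 0` into `A`
and the rest of the boundary to the basepoint `x`. -/
structure RelLoop (n : ℕ) (X : Type*) [TopologicalSpace X] (A : Set X) (x : X) where
  toFun : C(Cube (n + 1), X)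
  face_mem : ∀ t, t 0 = 0 → toFun t ∈ A
  j_eq : ∀ t, inJ t → toFun t = x

/-- Homotopy of relative loops, through relative loops. -/
def RelHomotopic {n : ℕ} {X : Type*} [TopologicalSpace X] {A : Set X} {x : X}
    (g₀ g₁ : RelLoop n X A x) : Prop :=
  ∃ H : C(unitInterval × Cube (n + 1), X),
    (∀ t, H (0, t) = g₀.toFun t) ∧ (∀ t, H (1, t) = g₁.toFun t) ∧
    (∀ s t, t 0 = 0 → H (s, t) ∈ A) ∧ (∀ s t, inJ t → H (s, t) = x)

/-- The relative homotopy group (as a set) `π_{n+1}(X, A, x)`. -/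
def RelPi (n : ℕ) (X : Type*) [TopologicalSpace X] (A : Set X) (x : X) : Type _ :=
  Quot (@RelHomotopic n X _ A x)

/-- The constant relative loop at the basepoint. -/
def RelLoop.const (n : ℕ) {X : Type*} [TopologicalSpace X] {A : Set X} {x : X} (hx : x ∈ A) :
    RelLoop n X A x :=
  ⟨ContinuousMap.const _ x, fun _ _ => hx, fun _ _ => rfl⟩

/-- The distinguished element of `π_{n+1}(X, A, x)`. -/
def RelPi.base (n : ℕ) {X : Type*} [TopologicalSpace X] {A : Set X} {x : X} (hx : x ∈ A) :
    RelPi n X A x := Quot.mk _ (RelLoop.const n hx)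

/-- The map on relative loops induced by a continuous map of pairs. -/
def RelLoop.map {n : ℕ} {X Y : Type*} [TopologicalSpace X] [TopologicalSpace Y]
    {A : Set X} {B : Set Y} {x : X} {y : Y}
    (f : C(X, Y)) (hAB : MapsTo f A B) (hxy : f x = y)
    (g : RelLoop n X A x) : RelLoop n Y B y where
  toFun := f.comp g.toFun
  face_mem := fun t ht => hAB (g.face_mem t ht)
  j_eq := fun t ht => by
    simp only [ContinuousMap.comp_apply, g.j_eq t ht, hxy]

/-- The map `π_{n+1}(X, A, x) → π_{n+1}(Y, B, y)` induced by a continuous map of pairs. -/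
def RelPi.map {n : ℕ} {X Y : Type*} [TopologicalSpace X] [TopologicalSpace Y]
    {A : Set X} {B : Set Y} {x : X} {y : Y}
    (f : C(X, Y)) (hAB : MapsTo f A B) (hxy : f x = y) :
    RelPi n X A x → RelPi n Y B y :=
  Quot.map (RelLoop.map f hAB hxy) (by
    rintro a b ⟨H, h0, h1, hA, hJ⟩
    refine ⟨f.comp H, fun t => ?_, fun t => ?_, fun s t ht => hAB (hA s t ht),
      fun s t ht => ?_⟩
    · simp [RelLoop.map, h0 t]
    · simp [RelLoop.map, h1 t]
    · simp only [ContinuousMap.comp_apply, hJ s t ht, hxy])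

/-- π₀ of a space, as the set of path components. -/
def Pi0 (X : Type*) [TopologicalSpace X] : Type _ := ZerothHomotopy X

/-- The path component of a point. -/
def Pi0.mk {X : Type*} [TopologicalSpace X] (x : X) : Pi0 X :=
  @Quotient.mk' X (pathSetoid X) x

/-- The map on π₀ induced by a continuous map. -/
def Pi0.map {X Y : Type*} [TopologicalSpace X] [TopologicalSpace Y] (f : C(X, Y)) :
    Pi0 X → Pi0 Y :=
  @Quotient.map' X Y (pathSetoid X) (pathSetoid Y) f
    (fun _ _ h => ⟨(h.somePath.map f.continuous)⟩)

/-- Exactness of a pair of composable maps of pointed sets at the middle term: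
the image of `f` is the preimage of the distinguished point `c` under `g`. -/
def ExactAt {A B C : Type*} (f : A → B) (g : B → C) (c : C) : Prop :=
  ∀ b : B, (∃ a, f a = b) ↔ g b = c

/-- A subset is exhaustive if it meets every path component. -/
def Exhaustive {Y : Type*} [TopologicalSpace Y] (S : Set Y) : Prop :=
  ∀ y : Y, ∃ s ∈ S, Joined y s

/-- `S` is an exhaustive subset of the subspace `T`: it meets every path component of `T`. -/
def ExhaustiveIn {Y : Type*} [TopologicalSpace Y] (S T : Set Y) : Prop :=
  S ⊆ T ∧ ∀ y ∈ T, ∃ s ∈ S, JoinedIn T y s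

end

noncomputable section

theorem continuous_consZero {n : ℕ} :
    Continuous fun t : Cube (n + 1) => (Fin.cons 0 t : Cube (n + 2)) := by
  refine continuous_pi fun i => ?_
  refine Fin.cases ?_ (fun j => ?_) i
  · simpa using continuous_const
  · simpa using continuous_apply j

theorem consZero_face {n : ℕ} (t : Cube (n + 1)) : (Fin.cons 0 t : Cube (n + 2)) 0 = 0 :=
  Fin.cons_zero _ _

theorem consZero_inJ_of_zero {n : ℕ} {t : Cube (n + 1)} (ht : t 0 = 0) :
    inJ (Fin.cons 0 t : Cube (n + 2)) :=
  ⟨Fin.succ 0, Or.inr ⟨Fin.succ_ne_zero 0, by simpa using ht⟩⟩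

theorem consZero_inJ_of_inJ {n : ℕ} {t : Cube (n + 1)} (ht : inJ t) :
    inJ (Fin.cons 0 t : Cube (n + 2)) := by
  obtain ⟨i, hi | ⟨hi0, hi⟩⟩ := ht
  · exact ⟨i.succ, Or.inl (by simpa using hi)⟩
  · exact ⟨i.succ, Or.inr ⟨Fin.succ_ne_zero i, by simpa using hi⟩⟩

/-- The boundary representative: restriction of a relative loop to the face `t 0 = 0`,
viewed as a loop in the subspace `A`. -/
def RelLoop.boundary {n : ℕ} {X : Type*} [TopologicalSpace X] {A : Set X} {x : X}
    (hx : x ∈ A) (g : RelLoop (n + 1) X A x) :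
    RelLoop n (↥A) ({⟨x, hx⟩} : Set ↥A) ⟨x, hx⟩ where
  toFun := ⟨fun t => ⟨g.toFun (Fin.cons 0 t), g.face_mem _ (consZero_face t)⟩,
    Continuous.subtype_mk (g.toFun.continuous.comp continuous_consZero) _⟩
  face_mem := fun t ht => by
    have := g.j_eq _ (consZero_inJ_of_zero ht)
    exact Set.mem_singleton_iff.2 (Subtype.ext this)
  j_eq := fun t ht => Subtype.ext (g.j_eq _ (consZero_inJ_of_inJ ht))

/-- The boundary map `∂_* : π_{n+2}(X, A, x) → π_{n+1}(A, x)` of the pair `(X, A)`. -/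
def RelPi.boundary {n : ℕ} {X : Type*} [TopologicalSpace X] {A : Set X} {x : X}
    (hx : x ∈ A) : RelPi (n + 1) X A x → RelPi n (↥A) ({⟨x, hx⟩} : Set ↥A) ⟨x, hx⟩ :=
  Quot.map (RelLoop.boundary hx) (by
    rintro a b ⟨H, h0, h1, hA, hJ⟩
    refine ⟨⟨fun p => ⟨H (p.1, Fin.cons 0 p.2), hA _ _ (consZero_face _)⟩,
      Continuous.subtype_mk (H.continuous.comp
        (continuous_fst.prodMk (continuous_consZero.comp continuous_snd))) _⟩,
      fun t => ?_, fun t => ?_, fun s t ht => ?_, fun s t ht => ?_⟩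
    · exact Subtype.ext (by simp [RelLoop.boundary, h0])
    · exact Subtype.ext (by simp [RelLoop.boundary, h1])
    · exact Set.mem_singleton_iff.2 (Subtype.ext (hJ _ _ (consZero_inJ_of_zero ht)))
    · exact Subtype.ext (hJ _ _ (consZero_inJ_of_inJ ht)))

/-- The boundary map `∂_* : π_1(X, A, x) → π_0(A)` of the pair `(X, A)`. -/
def RelPi.boundary0 {X : Type*} [TopologicalSpace X] {A : Set X} {x : X} :
    RelPi 0 X A x → Pi0 (↥A) :=
  Quot.lift (fun g => Pi0.mk (⟨g.toFun (fun _ => 0), g.face_mem _ rfl⟩ : ↥A)) (by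
    rintro a b ⟨H, h0, h1, hA, hJ⟩
    refine @Quotient.sound _ (pathSetoid ↥A) _ _ ⟨⟨⟨fun s => ⟨H (s, fun _ => 0), hA s _ rfl⟩,
      Continuous.subtype_mk (H.continuous.comp
        (continuous_id.prodMk continuous_const)) _⟩, ?_, ?_⟩⟩
    · exact Subtype.ext (by simpa using h0 (fun _ => 0))
    · exact Subtype.ext (by simpa using h1 (fun _ => 0)))

end

noncomputable section

variable {X Y : Type*} [TopologicalSpace X] [TopologicalSpace Y]

/-- The fiber of `f` over `y`, as a subset of `X`. -/
def fiber (f : C(X, Y)) (y : Y) : Set X := f ⁻¹' {y}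

/-- The inclusion of the fiber in the total space. -/
def fiberIncl (f : C(X, Y)) (y : Y) : C(↥(fiber f y), X) :=
  ⟨Subtype.val, continuous_subtype_val⟩

/-- The basepoint of the fiber. -/
def fiberPt (f : C(X, Y)) {y : Y} {x : X} (hx : x ∈ fiber f y) : ↥(fiber f y) := ⟨x, hx⟩

/-- `i_* : π_{q+1}(F_y, x) → π_{q+1}(X, x)` induced by the inclusion of the fiber. -/
def iStar (f : C(X, Y)) {y : Y} {x : X} (hx : x ∈ fiber f y) (q : ℕ) :
    RelPi q (↥(fiber f y)) {fiberPt f hx} (fiberPt f hx) → RelPi q X ({x} : Set X) x :=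
  RelPi.map (fiberIncl f y)
    (fun a ha => by rw [Set.mem_singleton_iff] at ha; rw [ha]; rfl) rfl

/-- `f_* : π_{q+1}(X, x) → π_{q+1}(Y, y)` induced by `f` on absolute homotopy groups. -/
def fStarAbs (f : C(X, Y)) {y : Y} {x : X} (hx : x ∈ fiber f y) (q : ℕ) :
    RelPi q X ({x} : Set X) x → RelPi q Y ({y} : Set Y) y :=
  RelPi.map f (fun a ha => by rw [Set.mem_singleton_iff] at ha ⊢; rw [ha]; exact hx) hx

/-- `j_* : π_{q+1}(X, x) → π_{q+1}(X, F_y, x)` induced by the inclusion of pairs. -/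
def jStar (f : C(X, Y)) {y : Y} {x : X} (hx : x ∈ fiber f y) (q : ℕ) :
    RelPi q X ({x} : Set X) x → RelPi q X (fiber f y) x :=
  RelPi.map (ContinuousMap.id X)
    (fun a ha => by rw [Set.mem_singleton_iff] at ha; rw [ha]; exact hx) rfl

/-- `f_* : π_{q+1}(X, F_y, x) → π_{q+1}(Y, y)` induced by `f` on relative homotopy groups. -/
def fStarRel (f : C(X, Y)) {y : Y} {x : X} (hx : x ∈ fiber f y) (q : ℕ) :
    RelPi q X (fiber f y) x → RelPi q Y ({y} : Set Y) y :=
  RelPi.map f (fun _ ha => ha) hx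

/-- `i_* : π₀(F_y) → π₀(X)`. -/
def iStar0 (f : C(X, Y)) (y : Y) : Pi0 (↥(fiber f y)) → Pi0 X :=
  Pi0.map (fiberIncl f y)

/-- `f_* : π₀(X) → π₀(Y)`. -/
def fStar0 (f : C(X, Y)) : Pi0 X → Pi0 Y := Pi0.map f

/-- `f` restricted to a map `f⁻¹(Y') → Y'`. -/
def restrictMap (f : C(X, Y)) (Y' : Set Y) : C(↥(f ⁻¹' Y'), ↥Y') :=
  ⟨Y'.restrictPreimage f, f.continuous.restrictPreimage⟩

/-- A continuous map `g : A → B` is a weak homotopy equivalence: it induces a bijection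
on path components and bijections on all homotopy groups at all basepoints. -/
def IsWeakEquiv {A B : Type*} [TopologicalSpace A] [TopologicalSpace B] (g : C(A, B)) : Prop :=
  Function.Bijective (Pi0.map g) ∧
  ∀ (a : A) (q : ℕ),
    Function.Bijective (RelPi.map (n := q) g
      (fun b hb => by rw [Set.mem_singleton_iff] at hb ⊢; rw [hb]) rfl :
      RelPi q A ({a} : Set A) a → RelPi q B ({g a} : Set B) (g a))

end

noncomputable section

variable {X Y : Type*} [TopologicalSpace X] [TopologicalSpace Y]

/-- `f` is a `c`-quasifibration at the point `y` (Definition of an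
almost-quasifibration at `y`, together with the commutativity of Diagram 1):
for every `x` in the fiber over `y` there are connecting homomorphisms `∂`
making the long homotopy sequence exact and compatible with the boundary maps
of the pair `(X, F_y)`. -/
def IsCQuasifibAt (f : C(X, Y)) (y : Y) : Prop :=
  ∀ (x : X) (hx : x ∈ fiber f y),
    ∃ (d0 : RelPi 0 Y ({y} : Set Y) y → Pi0 ↥(fiber f y))
      (d : (q : ℕ) → RelPi (q + 1) Y ({y} : Set Y) y →
        RelPi q (↥(fiber f y)) {fiberPt f hx} (fiberPt f hx)),
      -- the connecting maps are pointed
      d0 (RelPi.base 0 (Set.mem_singleton _)) = Pi0.mk (fiberPt f hx) ∧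
      (∀ q, d q (RelPi.base (q + 1) (Set.mem_singleton _)) =
        RelPi.base q (Set.mem_singleton _)) ∧
      -- exactness at `π_{q+1}(X, x)`
      (∀ q, ExactAt (iStar f hx q) (fStarAbs f hx q) (RelPi.base q (Set.mem_singleton _))) ∧
      -- exactness at `π_{q+2}(Y, y)` and at `π_1(Y, y)`
      (∀ q, ExactAt (fStarAbs f hx (q + 1)) (d q) (RelPi.base q (Set.mem_singleton _))) ∧
      ExactAt (fStarAbs f hx 0) d0 (Pi0.mk (fiberPt f hx)) ∧
      -- exactness at `π_{q+1}(F_y, x)`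
      (∀ q, ExactAt (d q) (iStar f hx q) (RelPi.base q (Set.mem_singleton _))) ∧
      -- exactness at `π₀(F_y)`, `π₀(X)` and surjectivity onto `π₀(Y)`
      ExactAt d0 (iStar0 f y) (Pi0.mk x) ∧
      ExactAt (iStar0 f y) (fStar0 f) (Pi0.mk y) ∧
      Function.Surjective (fStar0 f : Pi0 X → Pi0 Y) ∧
      -- commutativity of Diagram 1: `∂ ∘ f_* = ∂_*`
      (∀ q (α : RelPi (q + 1) X (fiber f y) x),
        d q (fStarRel f hx (q + 1) α) = RelPi.boundary hx α) ∧
      (∀ α : RelPi 0 X (fiber f y) x, d0 (fStarRel f hx 0 α) = RelPi.boundary0 α)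

/-- `f` is a `k`-`c`-quasifibration at the point `y`: the `k`-truncated long homotopy
sequence `1 → π_k(F) → π_k(X) → π_k(Y) → π_{k-1}(F) → ⋯ → π₀(Y) → 1` exists and is exact,
and the connecting maps `∂` are compatible with the boundary maps of the pair `(X, F_y)`
(Diagram 1 commutes in all relevant degrees). -/
def IsKCQuasifibAt (k : ℕ) (f : C(X, Y)) (y : Y) : Prop :=
  ∀ (x : X) (hx : x ∈ fiber f y),
    ∃ (d0 : 0 < k → (RelPi 0 Y ({y} : Set Y) y → Pi0 ↥(fiber f y)))
      (d : (q : ℕ) → q + 1 < k → (RelPi (q + 1) Y ({y} : Set Y) y →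
        RelPi q (↥(fiber f y)) {fiberPt f hx} (fiberPt f hx))),
      (∀ h : 0 < k, d0 h (RelPi.base 0 (Set.mem_singleton _)) = Pi0.mk (fiberPt f hx)) ∧
      (∀ q (h : q + 1 < k), d q h (RelPi.base (q + 1) (Set.mem_singleton _)) =
        RelPi.base q (Set.mem_singleton _)) ∧
      -- the sequence starts `1 → π_k(F) → π_k(X)`
      (∀ m, k = m + 1 → Function.Injective (iStar f hx m)) ∧
      (k = 0 → Function.Injective (iStar0 f y)) ∧
      (∀ q, q < k → ExactAt (iStar f hx q) (fStarAbs f hx q)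
        (RelPi.base q (Set.mem_singleton _))) ∧
      (∀ q (h : q + 1 < k), ExactAt (fStarAbs f hx (q + 1)) (d q h)
        (RelPi.base q (Set.mem_singleton _))) ∧
      (∀ h : 0 < k, ExactAt (fStarAbs f hx 0) (d0 h) (Pi0.mk (fiberPt f hx))) ∧
      (∀ q (h : q + 1 < k), ExactAt (d q h) (iStar f hx q)
        (RelPi.base q (Set.mem_singleton _))) ∧
      (∀ h : 0 < k, ExactAt (d0 h) (iStar0 f y) (Pi0.mk x)) ∧
      ExactAt (iStar0 f y) (fStar0 f) (Pi0.mk y) ∧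
      Function.Surjective (fStar0 f : Pi0 X → Pi0 Y) ∧
      (∀ q (h : q + 1 < k) (α : RelPi (q + 1) X (fiber f y) x),
        d q h (fStarRel f hx (q + 1) α) = RelPi.boundary hx α) ∧
      (∀ (h : 0 < k) (α : RelPi 0 X (fiber f y) x),
        d0 h (fStarRel f hx 0 α) = RelPi.boundary0 α)

/-- `f` is a `k`-`c`-quasifibration with respect to the subset `Yt` of `Y`. -/
def IsKCQuasifibRel (k : ℕ) (f : C(X, Y)) (Yt : Set Y) : Prop :=
  ∀ y ∈ Yt, IsKCQuasifibAt k f y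

/-- `f` is a `c`-quasifibration with respect to `Yt`: for every `y ∈ Yt` and every `x`
in the fiber over `y`, `f : (X, F_y, x) → (Y, y)` is a weak equivalence, i.e.
`f_* : π_{q+1}(X, F_y, x) → π_{q+1}(Y, y)` is bijective for all `q ≥ 0`. -/
def IsCQuasifibRel (f : C(X, Y)) (Yt : Set Y) : Prop :=
  ∀ y ∈ Yt, ∀ (x : X) (hx : x ∈ fiber f y) (q : ℕ), Function.Bijective (fStarRel f hx q)

/-- `Y'` is `c`-distinguished with respect to `Yt' ⊆ Y'`:
the restriction `f⁻¹(Y') → Y'` is a `c`-quasifibration with respect to `Yt'`. -/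
def CDistinguished (f : C(X, Y)) (Y' Yt' : Set Y) : Prop :=
  IsCQuasifibRel (restrictMap f Y') (Subtype.val ⁻¹' Yt')

/-- `Y'` is `k`-`c`-distinguished with respect to `Yt' ⊆ Y'`. -/
def KCDistinguished (k : ℕ) (f : C(X, Y)) (Y' Yt' : Set Y) : Prop :=
  IsKCQuasifibRel k (restrictMap f Y') (Subtype.val ⁻¹' Yt')

/-- A map of pairs `g : (X, A) → (Y, B)` is a `k`-`c`-equivalence with respect to a subset
`At ⊆ A`: the `π₀`-condition holds, and at basepoints in `At` the induced maps on relative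
homotopy groups are bijective below degree `k` and surjective in degree `k`. -/
def IsKCEquiv (k : ℕ) (g : C(X, Y)) (A : Set X) (B : Set Y)
    (hAB : MapsTo g A B) (At : Set X) : Prop :=
  (Pi0.map g ⁻¹' Set.range (Pi0.map (⟨Subtype.val, continuous_subtype_val⟩ : C(↥B, Y)))
      = Set.range (Pi0.map (⟨Subtype.val, continuous_subtype_val⟩ : C(↥A, X)))) ∧
  ∀ x ∈ At,
    (∀ q, q + 2 ≤ k → Function.Bijective (RelPi.map (n := q) g hAB rfl :
      RelPi q X A x → RelPi q Y B (g x))) ∧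
    (∀ q, q + 1 = k → Function.Surjective (RelPi.map (n := q) g hAB rfl :
      RelPi q X A x → RelPi q Y B (g x)))

end

noncomputable section

variable {X Y : Type*} [TopologicalSpace X] [TopologicalSpace Y]

/-- An inverse of `f_* : π_{q+1}(X, F_y, x) → π_{q+1}(Y, y)` (an honest two-sided inverse
when `f_*` is bijective); used to define the connecting map `∂ = ∂_* ∘ (f_*)⁻¹`. -/
def fStarRelInv (f : C(X, Y)) {y : Y} {x : X} (hx : x ∈ fiber f y) (q : ℕ) :
    RelPi q Y ({y} : Set Y) y → RelPi q X (fiber f y) x :=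
  @Function.invFun _ _ ⟨RelPi.base q hx⟩ (fStarRel f hx q)

/-- The restriction of a map of pairs to a map of the subspaces. -/
def restrictPair (f : C(X, Y)) (A : Set X) (B : Set Y) (h : MapsTo f A B) : C(↥A, ↥B) :=
  ⟨h.restrict f A B, f.continuous.restrict h⟩

/-- The map induced on fibers by a commutative square. -/
def fiberMapOfSquare {X' Y' : Type*} [TopologicalSpace X'] [TopologicalSpace Y']
    (f : C(X, Y)) (f' : C(X', Y')) (g : C(X, X')) (h : C(Y, Y'))
    (hcomm : ∀ a, f' (g a) = h (f a)) (y : Y) :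
    C(↥(fiber f y), ↥(fiber f' (h y))) :=
  have hm : ∀ a : ↥(fiber f y), g a.1 ∈ fiber f' (h y) := fun a => by
    have ha : f a.1 = y := Set.mem_singleton_iff.mp (Set.mem_preimage.mp a.2)
    exact Set.mem_preimage.mpr (Set.mem_singleton_iff.mpr (by rw [hcomm, ha]))
  ⟨fun a => ⟨g a.1, hm a⟩,
    (g.continuous.comp continuous_subtype_val).subtype_mk _⟩

/-- The map induced on fibers by the time-one map of a deformation. -/
def fiberDeformMap (f : C(X, Y)) (H : C(X × unitInterval, X)) {y y' : Y}
    (hmap : ∀ x, x ∈ fiber f y → H (x, 1) ∈ fiber f y') :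
    C(↥(fiber f y), ↥(fiber f y')) :=
  ⟨fun a => ⟨H (a.1, 1), hmap a.1 a.2⟩,
    (H.continuous.comp (continuous_subtype_val.prodMk continuous_const)).subtype_mk _⟩

end

section Aux
namespace S12

variable {X Y : Type*} [TopologicalSpace X] [TopologicalSpace Y]

theorem RelLoop.ext' {n : ℕ} {A : Set X} {x : X} {g g' : RelLoop n X A x}
    (h : ∀ t, g.toFun t = g'.toFun t) : g = g' := by
  obtain ⟨a, b, c⟩ := g; obtain ⟨a', b', c'⟩ := g'
  obtain rfl : a = a' := ContinuousMap.ext h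
  rfl

theorem relHomotopic_refl {n : ℕ} {A : Set X} {x : X} (g : RelLoop n X A x) :
    RelHomotopic g g :=
  ⟨g.toFun.comp ⟨Prod.snd, continuous_snd⟩, fun _ => rfl, fun _ => rfl,
    fun _ t ht => g.face_mem t ht, fun _ t ht => g.j_eq t ht⟩

theorem relHomotopic_symm {n : ℕ} {A : Set X} {x : X} {g g' : RelLoop n X A x}
    (h : RelHomotopic g g') : RelHomotopic g' g := by
  obtain ⟨H, h0, h1, hA, hJ⟩ := h
  refine ⟨H.comp ⟨fun p => (unitInterval.symm p.1, p.2),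
      (unitInterval.continuous_symm.comp continuous_fst).prodMk continuous_snd⟩,
      fun t => ?_, fun t => ?_, fun s t ht => hA _ t ht,
      fun s t ht => hJ _ t ht⟩
  · simpa [unitInterval.symm_zero] using h1 t
  · simpa [unitInterval.symm_one] using h0 t

theorem relHomotopic_trans {n : ℕ} {A : Set X} {x : X} {g₀ g₁ g₂ : RelLoop n X A x}
    (h : RelHomotopic g₀ g₁) (h' : RelHomotopic g₁ g₂) : RelHomotopic g₀ g₂ := by
  obtain ⟨H, h0, h1, hA, hJ⟩ := h
  obtain ⟨H', h0', h1', hA', hJ'⟩ := h'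
  let F : ContinuousMap.Homotopy g₀.toFun g₁.toFun := ⟨H, h0, h1⟩
  let F' : ContinuousMap.Homotopy g₁.toFun g₂.toFun := ⟨H', h0', h1'⟩
  refine ⟨(F.trans F').toContinuousMap, fun t => (F.trans F').apply_zero t,
    fun t => (F.trans F').apply_one t, fun s t ht => ?_, fun s t ht => ?_⟩
  · show (F.trans F') (s, t) ∈ A
    rw [ContinuousMap.Homotopy.trans_apply]
    split_ifs
    · exact hA _ t ht
    · exact hA' _ t ht
  · show (F.trans F') (s, t) = x
    rw [ContinuousMap.Homotopy.trans_apply]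
    split_ifs
    · exact hJ _ t ht
    · exact hJ' _ t ht

theorem relHomotopic_equivalence (n : ℕ) (A : Set X) (x : X) :
    Equivalence (@RelHomotopic n X _ A x) :=
  ⟨relHomotopic_refl, relHomotopic_symm, relHomotopic_trans⟩

theorem RelPi.mk_eq {n : ℕ} {A : Set X} {x : X} {g g' : RelLoop n X A x} :
    (Quot.mk _ g : RelPi n X A x) = Quot.mk _ g' ↔ RelHomotopic g g' := by
  rw [Quot.eq]
  exact (relHomotopic_equivalence n A x).eqvGen_iff

theorem RelPi.eq_of_htpy {n : ℕ} {A : Set X} {x : X} {a b : RelPi n X A x}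
    {ga gb : RelLoop n X A x} (ha : a = Quot.mk _ ga) (hb : b = Quot.mk _ gb)
    (h : RelHomotopic ga gb) : a = b := by
  rw [ha, hb]; exact RelPi.mk_eq.2 h

theorem RelPi.htpy_of_eq {n : ℕ} {A : Set X} {x : X} {a b : RelPi n X A x}
    {ga gb : RelLoop n X A x} (ha : a = Quot.mk _ ga) (hb : b = Quot.mk _ gb)
    (h : a = b) : RelHomotopic ga gb := by
  rw [ha, hb] at h; exact RelPi.mk_eq.1 h

theorem Pi0.mk_eq {a b : X} : (Pi0.mk a = Pi0.mk b) ↔ Joined a b :=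
  ⟨fun h => @Quotient.exact' _ (pathSetoid X) _ _ h,
   fun h => @Quotient.sound' _ (pathSetoid X) _ _ h⟩

theorem Pi0.eq_of_joined {a b : Pi0 X} {pa pb : X} (ha : a = Pi0.mk pa)
    (hb : b = Pi0.mk pb) (h : Joined pa pb) : a = b := by
  rw [ha, hb]; exact Pi0.mk_eq.2 h

theorem Pi0.joined_of_eq {a b : Pi0 X} {pa pb : X} (ha : a = Pi0.mk pa)
    (hb : b = Pi0.mk pb) (h : a = b) : Joined pa pb := by
  rw [ha, hb] at h; exact Pi0.mk_eq.1 h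

theorem continuous_cons {n : ℕ} :
    Continuous fun p : unitInterval × Cube (n + 1) => (Fin.cons p.1 p.2 : Cube (n + 2)) := by
  refine continuous_pi fun i => ?_
  refine Fin.cases ?_ (fun j => ?_) i
  · simpa using continuous_fst
  · simp only [Fin.cons_succ]
    exact (continuous_apply j).comp continuous_snd

theorem cons_inJ {n : ℕ} (s : unitInterval) {t : Cube (n + 1)} (ht : inJ t) :
    inJ (Fin.cons s t : Cube (n + 2)) := by
  obtain ⟨i, hi | ⟨hi0, hi⟩⟩ := ht
  · exact ⟨i.succ, Or.inl (by simpa using hi)⟩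
  · exact ⟨i.succ, Or.inr ⟨Fin.succ_ne_zero i, by simpa using hi⟩⟩

theorem continuous_headTail {n : ℕ} :
    Continuous fun t : Cube (n + 2) => ((t 0, Fin.tail t) : unitInterval × Cube (n + 1)) :=
  (continuous_apply 0).prodMk (continuous_pi fun j => continuous_apply j.succ)


section Global
variable (f : C(X, Y)) {y : Y} {x : X}

theorem RelPi.map_base {n : ℕ} {A : Set X} {B : Set Y} {x : X} {y : Y}
    (g : C(X, Y)) (hAB : Set.MapsTo g A B) (hxy : g x = y)
    (hxA : x ∈ A) (hyB : y ∈ B) :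
    RelPi.map (n := n) g hAB hxy (RelPi.base n hxA) = RelPi.base n hyB :=
  congrArg (Quot.mk _) (RelLoop.ext' fun _ => hxy)

theorem fStarRel_jStar (hx : x ∈ fiber f y) (q : ℕ) (a : RelPi q X ({x} : Set X) x) :
    fStarRel f hx q (jStar f hx q a) = fStarAbs f hx q a := by
  induction a using Quot.ind with
  | _ g => exact congrArg (Quot.mk _) (RelLoop.ext' fun t => rfl)

theorem fStarAbs_iStar (hx : x ∈ fiber f y) (q : ℕ)
    (a : RelPi q (↥(fiber f y)) {fiberPt f hx} (fiberPt f hx)) :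
    fStarAbs f hx q (iStar f hx q a) = RelPi.base q (Set.mem_singleton y) := by
  induction a using Quot.ind with
  | _ g => exact congrArg (Quot.mk _) (RelLoop.ext' fun t => (g.toFun t).2)

theorem iStar_boundary (hx : x ∈ fiber f y) (q : ℕ) (α : RelPi (q + 1) X (fiber f y) x) :
    iStar f hx q (RelPi.boundary hx α) = RelPi.base q (Set.mem_singleton x) := by
  induction α using Quot.ind with
  | _ g =>
    refine RelPi.eq_of_htpy rfl rfl
      ⟨g.toFun.comp ⟨fun p => Fin.cons p.1 p.2, continuous_cons⟩,
        fun t => rfl, fun t => ?_, fun s t ht => ?_, fun s t ht => ?_⟩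
    · exact g.j_eq _ ⟨0, Or.inl (by simp)⟩
    · exact Set.mem_singleton_iff.2 (g.j_eq _ ⟨Fin.succ 0, Or.inr ⟨Fin.succ_ne_zero 0, by simpa using ht⟩⟩)
    · exact g.j_eq _ (cons_inJ s ht)

theorem boundary_base (hx : x ∈ fiber f y) (q : ℕ) :
    RelPi.boundary hx (RelPi.base (q + 1) hx) = RelPi.base q (Set.mem_singleton _) :=
  congrArg (Quot.mk _) (RelLoop.ext' fun _ => Subtype.ext rfl)

theorem boundary0_base (hx : x ∈ fiber f y) :
    RelPi.boundary0 (RelPi.base 0 hx) = Pi0.mk (fiberPt f hx) :=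
  congrArg Pi0.mk (Subtype.ext rfl)

theorem boundary_jStar (hx : x ∈ fiber f y) (q : ℕ) (a : RelPi (q + 1) X ({x} : Set X) x) :
    RelPi.boundary hx (jStar f hx (q + 1) a) = RelPi.base q (Set.mem_singleton _) := by
  induction a using Quot.ind with
  | _ g =>
    exact congrArg (Quot.mk _) (RelLoop.ext' fun t =>
      Subtype.ext (g.face_mem (Fin.cons 0 t) (Fin.cons_zero _ _)))

theorem boundary0_jStar (hx : x ∈ fiber f y) (a : RelPi 0 X ({x} : Set X) x) :
    RelPi.boundary0 (jStar f hx 0 a) = Pi0.mk (fiberPt f hx) := by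
  induction a using Quot.ind with
  | _ g => exact congrArg Pi0.mk (Subtype.ext (g.face_mem (fun _ => 0) rfl))

theorem iStar0_boundary0 (hx : x ∈ fiber f y) (α : RelPi 0 X (fiber f y) x) :
    iStar0 f y (RelPi.boundary0 α) = Pi0.mk x := by
  induction α using Quot.ind with
  | _ g =>
    refine Pi0.eq_of_joined rfl rfl
      ⟨⟨⟨fun s => g.toFun (fun _ => s), g.toFun.continuous.comp
        (continuous_pi fun _ => continuous_id)⟩, rfl, g.j_eq _ ⟨0, Or.inl rfl⟩⟩⟩

theorem exists_boundary_eq (hx : x ∈ fiber f y) (q : ℕ)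
    (b : RelPi q (↥(fiber f y)) {fiberPt f hx} (fiberPt f hx))
    (hb : iStar f hx q b = RelPi.base q (Set.mem_singleton x)) :
    ∃ α : RelPi (q + 1) X (fiber f y) x, RelPi.boundary hx α = b := by
  induction b using Quot.ind with
  | _ ℓ =>
    obtain ⟨H, h0, h1, hA, hJ⟩ := RelPi.htpy_of_eq rfl rfl hb
    refine ⟨Quot.mk _ ⟨H.comp ⟨fun t => (t 0, Fin.tail t), continuous_headTail⟩,
      fun t ht => ?_, fun t ht => ?_⟩, ?_⟩
    · show H (t 0, Fin.tail t) ∈ fiber f y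
      rw [ht, h0]
      exact (ℓ.toFun (Fin.tail t)).2
    · show H (t 0, Fin.tail t) = x
      obtain ⟨i, hi | ⟨hi0, hi⟩⟩ := ht
      · rcases Fin.eq_zero_or_eq_succ i with rfl | ⟨j, rfl⟩
        · rw [hi, h1]; rfl
        · exact hJ _ _ ⟨j, Or.inl hi⟩
      · obtain ⟨j, rfl⟩ : ∃ j : Fin (q + 1), j.succ = i := Fin.exists_succ_eq.2 hi0
        rcases Fin.eq_zero_or_eq_succ j with rfl | ⟨j', rfl⟩
        · have : Fin.tail t 0 = 0 := hi
          exact hA _ _ this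
        · exact hJ _ _ ⟨j'.succ, Or.inr ⟨Fin.succ_ne_zero j', hi⟩⟩
    · refine congrArg (Quot.mk _) (RelLoop.ext' fun t => Subtype.ext ?_)
      simpa [RelLoop.boundary, RelLoop.map, fiberIncl, Fin.tail_cons] using h0 t

theorem exists_boundary0_eq (hx : x ∈ fiber f y) (b : Pi0 (↥(fiber f y)))
    (hb : iStar0 f y b = Pi0.mk x) :
    ∃ α : RelPi 0 X (fiber f y) x, RelPi.boundary0 α = b := by
  induction b using Quot.ind with
  | _ p =>
    have hj : Joined (p : X) x := Pi0.joined_of_eq rfl rfl hb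
    obtain ⟨γ⟩ := hj
    refine ⟨Quot.mk _ ⟨⟨fun t => γ (t 0), γ.continuous.comp (continuous_apply 0)⟩,
      fun t ht => ?_, fun t ht => ?_⟩, ?_⟩
    · show γ (t 0) ∈ fiber f y
      rw [ht, γ.source]
      exact p.2
    · obtain ⟨i, hi | ⟨hi0, hi⟩⟩ := ht
      · have : t 0 = 1 := by rw [Subsingleton.elim (0 : Fin 1) i]; exact hi
        show γ (t 0) = x
        rw [this, γ.target]
      · exact absurd (Subsingleton.elim (0 : Fin 1) i) (fun h => hi0 h.symm)
    · exact congrArg Pi0.mk (Subtype.ext γ.source)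

end Global


section Level
variable (f : C(X, Y)) (S : Set Y) {y : Y} {x : X}

theorem memXS (hyS : y ∈ S) (hx : x ∈ fiber f y) : x ∈ f ⁻¹' S := by
  have hfx : f x = y := hx
  show f x ∈ S
  rw [hfx]; exact hyS

/-- The basepoint of the restricted total space. -/
def xS (hyS : y ∈ S) (hx : x ∈ fiber f y) : ↥(f ⁻¹' S) := ⟨x, memXS f S hyS hx⟩

theorem xS_mem (hyS : y ∈ S) (hx : x ∈ fiber f y) :
    xS f S hyS hx ∈ fiber (restrictMap f S) ⟨y, hyS⟩ := by
  have hfx : f x = y := hx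
  exact Set.mem_singleton_iff.2 (Subtype.ext hfx)

/-- Inclusion of the restricted total space. -/
def inclS : C(↥(f ⁻¹' S), X) := ⟨Subtype.val, continuous_subtype_val⟩

/-- Inclusion of the restricted base. -/
def inclY : C(↥S, Y) := ⟨Subtype.val, continuous_subtype_val⟩

/-- From the fiber of the restriction to the fiber. -/
def fibDown (hyS : y ∈ S) : C(↥(fiber (restrictMap f S) ⟨y, hyS⟩), ↥(fiber f y)) :=
  ⟨fun p => ⟨p.1.1, show f p.1.1 = y from congrArg Subtype.val
      (Set.mem_singleton_iff.1 p.2)⟩,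
    (continuous_subtype_val.comp continuous_subtype_val).subtype_mk _⟩

/-- From the fiber to the fiber of the restriction. -/
def fibUp (hyS : y ∈ S) : C(↥(fiber f y), ↥(fiber (restrictMap f S) ⟨y, hyS⟩)) :=
  ⟨fun p => ⟨⟨p.1, memXS f S hyS p.2⟩, Set.mem_singleton_iff.2 (Subtype.ext p.2)⟩,
    (continuous_subtype_val.subtype_mk _).subtype_mk _⟩

variable (hyS : y ∈ S) (hx : x ∈ fiber f y)

/-- Pushforward on absolute homotopy of the total space. -/
def pushX (q : ℕ) :
    RelPi q (↥(f ⁻¹' S)) {xS f S hyS hx} (xS f S hyS hx) → RelPi q X ({x} : Set X) x :=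
  RelPi.map (inclS f S) (fun a ha => by
    rw [Set.mem_singleton_iff] at ha; rw [ha]; exact Set.mem_singleton _) rfl

/-- Pushforward on relative homotopy. -/
def pushRel (q : ℕ) :
    RelPi q (↥(f ⁻¹' S)) (fiber (restrictMap f S) ⟨y, hyS⟩) (xS f S hyS hx) →
      RelPi q X (fiber f y) x :=
  RelPi.map (inclS f S) (fun a ha =>
    show f a.1 = y from congrArg Subtype.val (Set.mem_singleton_iff.1 ha)) rfl

/-- Pushforward on homotopy of the base. -/
def pushY (q : ℕ) :
    RelPi q (↥S) {(⟨y, hyS⟩ : ↥S)} (⟨y, hyS⟩ : ↥S) → RelPi q Y ({y} : Set Y) y :=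
  RelPi.map (inclY S) (fun a ha => by
    rw [Set.mem_singleton_iff] at ha; rw [ha]; exact Set.mem_singleton _) rfl

/-- Pushforward on homotopy of the fiber. -/
def pushF (q : ℕ) :
    RelPi q (↥(fiber (restrictMap f S) ⟨y, hyS⟩)) {fiberPt (restrictMap f S) (xS_mem f S hyS hx)}
        (fiberPt (restrictMap f S) (xS_mem f S hyS hx)) →
      RelPi q (↥(fiber f y)) {fiberPt f hx} (fiberPt f hx) :=
  RelPi.map (fibDown f S hyS) (fun a ha => by
    rw [Set.mem_singleton_iff] at ha; rw [ha]
    exact Set.mem_singleton_iff.2 (Subtype.ext rfl)) (Subtype.ext rfl)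

/-- Inverse pushforward on homotopy of the fiber. -/
def pushFinv (q : ℕ) :
    RelPi q (↥(fiber f y)) {fiberPt f hx} (fiberPt f hx) →
      RelPi q (↥(fiber (restrictMap f S) ⟨y, hyS⟩)) {fiberPt (restrictMap f S) (xS_mem f S hyS hx)}
        (fiberPt (restrictMap f S) (xS_mem f S hyS hx)) :=
  RelPi.map (fibUp f S hyS) (fun a ha => by
    rw [Set.mem_singleton_iff] at ha; rw [ha]
    exact Set.mem_singleton_iff.2 (Subtype.ext (Subtype.ext rfl))) (Subtype.ext (Subtype.ext rfl))

/-- π₀ pushforward for the fiber. -/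
def pushF0 : Pi0 (↥(fiber (restrictMap f S) ⟨y, hyS⟩)) → Pi0 (↥(fiber f y)) :=
  Pi0.map (fibDown f S hyS)

/-- π₀ pushforward for the total space. -/
def pushX0 : Pi0 (↥(f ⁻¹' S)) → Pi0 X := Pi0.map (inclS f S)

theorem pushF_pushFinv (q : ℕ) (a : RelPi q (↥(fiber f y)) {fiberPt f hx} (fiberPt f hx)) :
    pushF f S hyS hx q (pushFinv f S hyS hx q a) = a := by
  induction a using Quot.ind with
  | _ g => exact congrArg (Quot.mk _) (RelLoop.ext' fun t => Subtype.ext rfl)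

theorem pushFinv_pushF (q : ℕ)
    (a : RelPi q (↥(fiber (restrictMap f S) ⟨y, hyS⟩)) {fiberPt (restrictMap f S) (xS_mem f S hyS hx)}
      (fiberPt (restrictMap f S) (xS_mem f S hyS hx))) :
    pushFinv f S hyS hx q (pushF f S hyS hx q a) = a := by
  induction a using Quot.ind with
  | _ g => exact congrArg (Quot.mk _) (RelLoop.ext' fun t => Subtype.ext (Subtype.ext rfl))

theorem pushF0_up (p : ↥(fiber f y)) :
    pushF0 f S hyS (Pi0.mk ((fibUp f S hyS) p)) = Pi0.mk p :=
  congrArg Pi0.mk (Subtype.ext rfl)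

theorem C1 (q : ℕ) (a : RelPi q (↥(f ⁻¹' S)) {xS f S hyS hx} (xS f S hyS hx)) :
    pushY S hyS q (fStarAbs (restrictMap f S) (xS_mem f S hyS hx) q a) =
      fStarAbs f hx q (pushX f S hyS hx q a) := by
  induction a using Quot.ind with
  | _ g => exact congrArg (Quot.mk _) (RelLoop.ext' fun t => rfl)

theorem C2 (q : ℕ)
    (a : RelPi q (↥(f ⁻¹' S)) (fiber (restrictMap f S) ⟨y, hyS⟩) (xS f S hyS hx)) :
    pushY S hyS q (fStarRel (restrictMap f S) (xS_mem f S hyS hx) q a) =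
      fStarRel f hx q (pushRel f S hyS hx q a) := by
  induction a using Quot.ind with
  | _ g => exact congrArg (Quot.mk _) (RelLoop.ext' fun t => rfl)

theorem C3 (q : ℕ)
    (a : RelPi q (↥(fiber (restrictMap f S) ⟨y, hyS⟩))
      {fiberPt (restrictMap f S) (xS_mem f S hyS hx)}
      (fiberPt (restrictMap f S) (xS_mem f S hyS hx))) :
    iStar f hx q (pushF f S hyS hx q a) =
      pushX f S hyS hx q (iStar (restrictMap f S) (xS_mem f S hyS hx) q a) := by
  induction a using Quot.ind with
  | _ g => exact congrArg (Quot.mk _) (RelLoop.ext' fun t => rfl)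

theorem C4 (q : ℕ)
    (a : RelPi (q + 1) (↥(f ⁻¹' S)) (fiber (restrictMap f S) ⟨y, hyS⟩) (xS f S hyS hx)) :
    RelPi.boundary hx (pushRel f S hyS hx (q + 1) a) =
      pushF f S hyS hx q (RelPi.boundary (xS_mem f S hyS hx) a) := by
  induction a using Quot.ind with
  | _ g => exact congrArg (Quot.mk _) (RelLoop.ext' fun t => Subtype.ext rfl)

theorem C5 (a : RelPi 0 (↥(f ⁻¹' S)) (fiber (restrictMap f S) ⟨y, hyS⟩) (xS f S hyS hx)) :
    RelPi.boundary0 (pushRel f S hyS hx 0 a) =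
      pushF0 f S hyS (RelPi.boundary0 a) := by
  induction a using Quot.ind with
  | _ g => exact congrArg Pi0.mk (Subtype.ext rfl)

theorem C6 (a : Pi0 (↥(fiber (restrictMap f S) ⟨y, hyS⟩))) :
    iStar0 f y (pushF0 f S hyS a) = pushX0 f S (iStar0 (restrictMap f S) ⟨y, hyS⟩ a) := by
  induction a using Quot.ind with
  | _ p => rfl

theorem liftY (q : ℕ) (g : RelLoop q Y ({y} : Set Y) y) (hg : ∀ t, g.toFun t ∈ S) :
    ∃ g' : RelLoop q (↥S) {(⟨y, hyS⟩ : ↥S)} (⟨y, hyS⟩ : ↥S),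
      (∀ t, (g'.toFun t : Y) = g.toFun t) ∧
      pushY S hyS q (Quot.mk _ g') = Quot.mk _ g := by
  refine ⟨⟨⟨fun t => ⟨g.toFun t, hg t⟩, g.toFun.continuous.subtype_mk _⟩,
    fun t ht => Set.mem_singleton_iff.2 (Subtype.ext (g.face_mem t ht)),
    fun t ht => Subtype.ext (g.j_eq t ht)⟩, fun t => rfl, ?_⟩
  exact congrArg (Quot.mk _) (RelLoop.ext' fun t => rfl)

theorem liftX (q : ℕ) (g : RelLoop q X ({x} : Set X) x)
    (hg : ∀ t, f (g.toFun t) ∈ S) :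
    ∃ g' : RelLoop q (↥(f ⁻¹' S)) {xS f S hyS hx} (xS f S hyS hx),
      (∀ t, (g'.toFun t : X) = g.toFun t) ∧
      pushX f S hyS hx q (Quot.mk _ g') = Quot.mk _ g := by
  refine ⟨⟨⟨fun t => ⟨g.toFun t, hg t⟩, g.toFun.continuous.subtype_mk _⟩,
    fun t ht => Set.mem_singleton_iff.2 (Subtype.ext (g.face_mem t ht)),
    fun t ht => Subtype.ext (g.j_eq t ht)⟩, fun t => rfl, ?_⟩
  exact congrArg (Quot.mk _) (RelLoop.ext' fun t => rfl)

theorem liftRel (q : ℕ) (g : RelLoop q X (fiber f y) x)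
    (hg : ∀ t, f (g.toFun t) ∈ S) :
    ∃ g' : RelLoop q (↥(f ⁻¹' S)) (fiber (restrictMap f S) ⟨y, hyS⟩) (xS f S hyS hx),
      (∀ t, (g'.toFun t : X) = g.toFun t) ∧
      pushRel f S hyS hx q (Quot.mk _ g') = Quot.mk _ g := by
  refine ⟨⟨⟨fun t => ⟨g.toFun t, hg t⟩, g.toFun.continuous.subtype_mk _⟩,
    fun t ht => Set.mem_singleton_iff.2 (Subtype.ext (g.face_mem t ht)),
    fun t ht => Subtype.ext (g.j_eq t ht)⟩, fun t => rfl, ?_⟩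
  exact congrArg (Quot.mk _) (RelLoop.ext' fun t => rfl)

end Level

end S12
end Aux

open S12

/-- Let `{Y_α}` be a covering of `Y` by subsets, totally ordered by
inclusion, such that every compact subset of `Y` lies in some `Y_α`, with exhaustive
subsets `Ỹ_α ⊆ Y_α` compatible with inclusions. If each `Y_α` is `k`-`c`-distinguished
with respect to `Ỹ_α`, then `f` is a `k`-`c`-quasifibration with respect to `⋃ Ỹ_α`. -/
theorem statement12 {X Y : Type*} [TopologicalSpace X] [TopologicalSpace Y]
    (f : C(X, Y)) (hsurj : Function.Surjective f) (k : ℕ)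
    (J : Type*) (Yc : J → Set Y)
    (hcover : ∀ y : Y, ∃ α, y ∈ Yc α)
    (htotal : ∀ α β, Yc α ⊆ Yc β ∨ Yc β ⊆ Yc α)
    (hcompact : ∀ K : Set Y, IsCompact K → ∃ α, K ⊆ Yc α)
    (Yt : J → Set Y) (hexh : ∀ α, ExhaustiveIn (Yt α) (Yc α))
    (hmono : ∀ α β, Yc α ⊆ Yc β → Yt α ⊆ Yt β)
    (hdist : ∀ α, KCDistinguished k f (Yc α) (Yt α)) :
    IsKCQuasifibRel k f (⋃ α, Yt α) := by
  classical
  intro y hy x hx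
  have hfx : f x = y := hx
  obtain ⟨α₀, hy0⟩ := Set.mem_iUnion.mp hy
  have pick : ∀ T : Set Y, IsCompact T → ∃ β, Yc α₀ ⊆ Yc β ∧ T ⊆ Yc β := by
    intro T hT
    obtain ⟨γ, hγ⟩ := hcompact T hT
    rcases htotal α₀ γ with h | h
    · exact ⟨γ, h, hγ⟩
    · exact ⟨α₀, subset_rfl, hγ.trans h⟩
  have hyt : ∀ β, Yc α₀ ⊆ Yc β → y ∈ Yt β := fun β hβ => hmono _ _ hβ hy0
  have hyc : ∀ β (hβ : Yc α₀ ⊆ Yc β), y ∈ Yc β := fun β hβ => (hexh β).1 (hyt β hβ)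
  have lev : ∀ β (hβ : Yc α₀ ⊆ Yc β),
      IsKCQuasifibAt k (restrictMap f (Yc β)) ⟨y, hyc β hβ⟩ :=
    fun β hβ => hdist β ⟨y, hyc β hβ⟩ (hyt β hβ)
  -- Key well-definedness lemma: the boundary map only depends on the image under fStarRel.
  have W : ∀ (q : ℕ), q + 1 < k → ∀ α α' : RelPi (q + 1) X (fiber f y) x,
      fStarRel f hx (q + 1) α = fStarRel f hx (q + 1) α' →
      RelPi.boundary hx α = RelPi.boundary hx α' := by
    intro q hq α α'
    induction α using Quot.ind with | _ g => ?_
    induction α' using Quot.ind with | _ g' => ?_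
    intro heq
    obtain ⟨H, h0, h1, hA, hJ⟩ := RelPi.htpy_of_eq rfl rfl heq
    obtain ⟨β, hβ, hr⟩ := pick (Set.range H) (isCompact_range H.continuous)
    have hyb := hyc β hβ
    have hgm : ∀ t, f (g.toFun t) ∈ Yc β := fun t => by
      have h0t : f (g.toFun t) = H (0, t) := (h0 t).symm
      rw [h0t]; exact hr ⟨(0, t), rfl⟩
    have hgm' : ∀ t, f (g'.toFun t) ∈ Yc β := fun t => by
      have h1t : f (g'.toFun t) = H (1, t) := (h1 t).symm
      rw [h1t]; exact hr ⟨(1, t), rfl⟩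
    obtain ⟨gS, hval, hpush⟩ := liftRel f (Yc β) hyb hx (q + 1) g hgm
    obtain ⟨gS', hval', hpush'⟩ := liftRel f (Yc β) hyb hx (q + 1) g' hgm'
    obtain ⟨d0β, dβ, pd0β, pdβ, injβ, inj0β, exIXβ, exYdβ, exYd0β, exdFβ, exd0Fβ,
      exIF0β, surj0β, diagβ, diag0β⟩ := lev β hβ (xS f (Yc β) hyb hx) (xS_mem f (Yc β) hyb hx)
    have hfs : fStarRel (restrictMap f (Yc β)) (xS_mem f (Yc β) hyb hx) (q + 1) (Quot.mk _ gS)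
        = fStarRel (restrictMap f (Yc β)) (xS_mem f (Yc β) hyb hx) (q + 1) (Quot.mk _ gS') := by
      refine RelPi.eq_of_htpy rfl rfl
        ⟨⟨fun p => ⟨H p, hr ⟨p, rfl⟩⟩, H.continuous.subtype_mk _⟩,
          fun t => ?_, fun t => ?_, fun s t ht => ?_, fun s t ht => ?_⟩
      · refine Subtype.ext ?_
        show H (0, t) = f ((gS.toFun t : X))
        rw [hval t]; exact h0 t
      · refine Subtype.ext ?_
        show H (1, t) = f ((gS'.toFun t : X))
        rw [hval' t]; exact h1 t
      · exact Set.mem_singleton_iff.2 (Subtype.ext (hA s t ht))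
      · exact Subtype.ext (hJ s t ht)
    have hbd : RelPi.boundary (xS_mem f (Yc β) hyb hx) (Quot.mk _ gS)
        = RelPi.boundary (xS_mem f (Yc β) hyb hx) (Quot.mk _ gS') := by
      have e1 := diagβ q hq (Quot.mk _ gS)
      have e2 := diagβ q hq (Quot.mk _ gS')
      rw [← e1, ← e2, hfs]
    calc RelPi.boundary hx (Quot.mk _ g)
        = RelPi.boundary hx (pushRel f (Yc β) hyb hx (q + 1) (Quot.mk _ gS)) := by rw [hpush]
      _ = id (α := RelPi q (↥(fiber f y)) {⟨x, hx⟩} ⟨x, hx⟩)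
          (pushF f (Yc β) hyb hx q (RelPi.boundary (xS_mem f (Yc β) hyb hx) (Quot.mk _ gS))) :=
          C4 f (Yc β) hyb hx q _
      _ = id (α := RelPi q (↥(fiber f y)) {⟨x, hx⟩} ⟨x, hx⟩)
          (pushF f (Yc β) hyb hx q (RelPi.boundary (xS_mem f (Yc β) hyb hx) (Quot.mk _ gS'))) := by
          rw [hbd]
      _ = RelPi.boundary hx (pushRel f (Yc β) hyb hx (q + 1) (Quot.mk _ gS')) :=
          (C4 f (Yc β) hyb hx q _).symm
      _ = RelPi.boundary hx (Quot.mk _ g') := by rw [hpush']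
  have W0 : 0 < k → ∀ α α' : RelPi 0 X (fiber f y) x,
      fStarRel f hx 0 α = fStarRel f hx 0 α' →
      RelPi.boundary0 α = RelPi.boundary0 α' := by
    intro hq α α'
    induction α using Quot.ind with | _ g => ?_
    induction α' using Quot.ind with | _ g' => ?_
    intro heq
    obtain ⟨H, h0, h1, hA, hJ⟩ := RelPi.htpy_of_eq rfl rfl heq
    obtain ⟨β, hβ, hr⟩ := pick (Set.range H) (isCompact_range H.continuous)
    have hyb := hyc β hβ
    have hgm : ∀ t, f (g.toFun t) ∈ Yc β := fun t => by
      have h0t : f (g.toFun t) = H (0, t) := (h0 t).symm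
      rw [h0t]; exact hr ⟨(0, t), rfl⟩
    have hgm' : ∀ t, f (g'.toFun t) ∈ Yc β := fun t => by
      have h1t : f (g'.toFun t) = H (1, t) := (h1 t).symm
      rw [h1t]; exact hr ⟨(1, t), rfl⟩
    obtain ⟨gS, hval, hpush⟩ := liftRel f (Yc β) hyb hx 0 g hgm
    obtain ⟨gS', hval', hpush'⟩ := liftRel f (Yc β) hyb hx 0 g' hgm'
    obtain ⟨d0β, dβ, pd0β, pdβ, injβ, inj0β, exIXβ, exYdβ, exYd0β, exdFβ, exd0Fβ,
      exIF0β, surj0β, diagβ, diag0β⟩ := lev β hβ (xS f (Yc β) hyb hx) (xS_mem f (Yc β) hyb hx)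
    have hfs : fStarRel (restrictMap f (Yc β)) (xS_mem f (Yc β) hyb hx) 0 (Quot.mk _ gS)
        = fStarRel (restrictMap f (Yc β)) (xS_mem f (Yc β) hyb hx) 0 (Quot.mk _ gS') := by
      refine RelPi.eq_of_htpy rfl rfl
        ⟨⟨fun p => ⟨H p, hr ⟨p, rfl⟩⟩, H.continuous.subtype_mk _⟩,
          fun t => ?_, fun t => ?_, fun s t ht => ?_, fun s t ht => ?_⟩
      · refine Subtype.ext ?_
        show H (0, t) = f ((gS.toFun t : X))
        rw [hval t]; exact h0 t
      · refine Subtype.ext ?_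
        show H (1, t) = f ((gS'.toFun t : X))
        rw [hval' t]; exact h1 t
      · exact Set.mem_singleton_iff.2 (Subtype.ext (hA s t ht))
      · exact Subtype.ext (hJ s t ht)
    have hbd : RelPi.boundary0 (Quot.mk _ gS) = RelPi.boundary0 (Quot.mk _ gS') := by
      have e1 := diag0β hq (Quot.mk _ gS)
      have e2 := diag0β hq (Quot.mk _ gS')
      rw [← e1, ← e2, hfs]
    calc RelPi.boundary0 (Quot.mk _ g)
        = RelPi.boundary0 (pushRel f (Yc β) hyb hx 0 (Quot.mk _ gS)) := by rw [hpush]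
      _ = pushF0 f (Yc β) hyb (RelPi.boundary0 (Quot.mk _ gS)) := C5 f (Yc β) hyb hx _
      _ = pushF0 f (Yc β) hyb (RelPi.boundary0 (Quot.mk _ gS')) := by rw [hbd]
      _ = RelPi.boundary0 (pushRel f (Yc β) hyb hx 0 (Quot.mk _ gS')) :=
          (C5 f (Yc β) hyb hx _).symm
      _ = RelPi.boundary0 (Quot.mk _ g') := by rw [hpush']
  have KeyElse : ∀ (q : ℕ) (hq : q + 1 < k) (c : RelPi (q + 1) Y ({y} : Set Y) y),
      ¬(∃ α : RelPi (q + 1) X (fiber f y) x, fStarRel f hx (q + 1) α = c) →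
      ∃ b : RelPi q (↥(fiber f y)) {fiberPt f hx} (fiberPt f hx),
        iStar f hx q b = RelPi.base q (Set.mem_singleton x) ∧
        b ≠ RelPi.base q (Set.mem_singleton _) := by
    intro q hq c
    induction c using Quot.ind with | _ g => ?_
    intro hc
    obtain ⟨β, hβ, hr⟩ := pick (Set.range g.toFun) (isCompact_range g.toFun.continuous)
    have hyb := hyc β hβ
    obtain ⟨gS, hval, hpush⟩ := liftY (Yc β) hyb (q + 1) g (fun t => hr ⟨t, rfl⟩)
    obtain ⟨d0β, dβ, pd0β, pdβ, injβ, inj0β, exIXβ, exYdβ, exYd0β, exdFβ, exd0Fβ,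
      exIF0β, surj0β, diagβ, diag0β⟩ := lev β hβ (xS f (Yc β) hyb hx) (xS_mem f (Yc β) hyb hx)
    refine ⟨pushF f (Yc β) hyb hx q (dβ q hq (Quot.mk _ gS)), ?_, ?_⟩
    · rw [C3 f (Yc β) hyb hx q, (exdFβ q hq _).1 ⟨Quot.mk _ gS, rfl⟩]
      exact RelPi.map_base _ _ _ (Set.mem_singleton _) (Set.mem_singleton _)
    · intro hb
      have hbβ : dβ q hq (Quot.mk _ gS) = RelPi.base q (Set.mem_singleton _) := by
        have h2 := congrArg (pushFinv f (Yc β) hyb hx q) hb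
        rw [pushFinv_pushF f (Yc β) hyb hx q] at h2
        rw [h2]
        exact RelPi.map_base _ _ _ (Set.mem_singleton _) (Set.mem_singleton _)
      obtain ⟨aβ, haβ⟩ := (exYdβ q hq (Quot.mk _ gS)).2 hbβ
      refine hc ⟨jStar f hx (q + 1) (pushX f (Yc β) hyb hx (q + 1) aβ), ?_⟩
      rw [fStarRel_jStar f hx (q + 1), ← C1 f (Yc β) hyb hx (q + 1) aβ, haβ]
      exact hpush
  have KeyElse0 : ∀ (hq : 0 < k) (c : RelPi 0 Y ({y} : Set Y) y),
      ¬(∃ α : RelPi 0 X (fiber f y) x, fStarRel f hx 0 α = c) →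
      ∃ b : Pi0 (↥(fiber f y)),
        iStar0 f y b = Pi0.mk x ∧ b ≠ Pi0.mk (fiberPt f hx) := by
    intro hq c
    induction c using Quot.ind with | _ g => ?_
    intro hc
    obtain ⟨β, hβ, hr⟩ := pick (Set.range g.toFun) (isCompact_range g.toFun.continuous)
    have hyb := hyc β hβ
    obtain ⟨gS, hval, hpush⟩ := liftY (Yc β) hyb 0 g (fun t => hr ⟨t, rfl⟩)
    obtain ⟨d0β, dβ, pd0β, pdβ, injβ, inj0β, exIXβ, exYdβ, exYd0β, exdFβ, exd0Fβ,
      exIF0β, surj0β, diagβ, diag0β⟩ := lev β hβ (xS f (Yc β) hyb hx) (xS_mem f (Yc β) hyb hx)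
    refine ⟨pushF0 f (Yc β) hyb (d0β hq (Quot.mk _ gS)), ?_, ?_⟩
    · rw [C6 f (Yc β) hyb, (exd0Fβ hq _).1 ⟨Quot.mk _ gS, rfl⟩]
      rfl
    · intro hb
      have hbβ : d0β hq (Quot.mk _ gS) = Pi0.mk (fiberPt (restrictMap f (Yc β))
          (xS_mem f (Yc β) hyb hx)) := by
        have h2 := congrArg (Pi0.map (fibUp f (Yc β) hyb)) hb
        have h3 : ∀ a, Pi0.map (fibUp f (Yc β) hyb) (pushF0 f (Yc β) hyb a) = a := by
          intro a
          induction a using Quot.ind with | _ p => ?_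
          exact congrArg Pi0.mk (Subtype.ext (Subtype.ext rfl))
        rw [h3] at h2
        rw [h2]
        exact congrArg Pi0.mk (Subtype.ext (Subtype.ext rfl))
      obtain ⟨aβ, haβ⟩ := (exYd0β hq (Quot.mk _ gS)).2 hbβ
      refine hc ⟨jStar f hx 0 (pushX f (Yc β) hyb hx 0 aβ), ?_⟩
      rw [fStarRel_jStar f hx 0, ← C1 f (Yc β) hyb hx 0 aβ, haβ]
      exact hpush
  refine ⟨fun hk c => if hc : ∃ α : RelPi 0 X (fiber f y) x, fStarRel f hx 0 α = c
      then RelPi.boundary0 (Classical.choose hc) else Classical.choose (KeyElse0 hk c hc),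
    fun q hq c => if hc : ∃ α : RelPi (q + 1) X (fiber f y) x, fStarRel f hx (q + 1) α = c
      then id (α := RelPi q (↥(fiber f y)) {fiberPt f hx} (fiberPt f hx))
        (RelPi.boundary hx (Classical.choose hc)) else Classical.choose (KeyElse q hq c hc),
    ?_, ?_, ?_, ?_, ?_, ?_, ?_, ?_, ?_, ?_, ?_, ?_, ?_⟩
  · -- pointedness of d0
    intro hk
    dsimp only
    have hc : ∃ α : RelPi 0 X (fiber f y) x,
        fStarRel f hx 0 α = RelPi.base 0 (Set.mem_singleton y) :=
      ⟨RelPi.base 0 hx, RelPi.map_base f _ hx hx (Set.mem_singleton y)⟩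
    rw [dif_pos hc]
    exact (W0 hk _ _ ((Classical.choose_spec hc).trans
      (RelPi.map_base f _ hx hx (Set.mem_singleton y)).symm)).trans (boundary0_base f hx)
  · -- pointedness of d
    intro q hq
    dsimp only
    have hc : ∃ α : RelPi (q + 1) X (fiber f y) x,
        fStarRel f hx (q + 1) α = RelPi.base (q + 1) (Set.mem_singleton y) :=
      ⟨RelPi.base (q + 1) hx, RelPi.map_base f _ hx hx (Set.mem_singleton y)⟩
    rw [dif_pos hc]
    exact (W q hq _ _ ((Classical.choose_spec hc).trans
      (RelPi.map_base f _ hx hx (Set.mem_singleton y)).symm)).trans (boundary_base f hx q)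
  · -- injectivity of iStar in top degree
    intro m hk a a'
    induction a using Quot.ind with | _ g => ?_
    induction a' using Quot.ind with | _ g' => ?_
    intro heq
    obtain ⟨H, h0, h1, hA, hJ⟩ := RelPi.htpy_of_eq rfl rfl heq
    obtain ⟨β, hβ, hr⟩ := pick (Set.range (f.comp H)) (isCompact_range (f.comp H).continuous)
    have hyb := hyc β hβ
    have hm : ∀ p : unitInterval × Cube (m + 1), H p ∈ f ⁻¹' Yc β := fun p => hr ⟨p, rfl⟩
    obtain ⟨d0β, dβ, pd0β, pdβ, injβ, inj0β, exIXβ, exYdβ, exYd0β, exdFβ, exd0Fβ,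
      exIF0β, surj0β, diagβ, diag0β⟩ := lev β hβ (xS f (Yc β) hyb hx) (xS_mem f (Yc β) hyb hx)
    have key : pushFinv f (Yc β) hyb hx m (Quot.mk _ g)
        = pushFinv f (Yc β) hyb hx m (Quot.mk _ g') := by
      apply injβ m hk
      refine RelPi.eq_of_htpy rfl rfl
        ⟨⟨fun p => ⟨H p, hm p⟩, H.continuous.subtype_mk _⟩,
          fun t => ?_, fun t => ?_, fun s t ht => ?_, fun s t ht => ?_⟩
      · exact Subtype.ext (h0 t)
      · exact Subtype.ext (h1 t)
      · exact Set.mem_singleton_iff.2 (Subtype.ext (hA s t ht))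
      · exact Subtype.ext (hJ s t ht)
    have h2 := congrArg (pushF f (Yc β) hyb hx m) key
    exact (pushF_pushFinv f (Yc β) hyb hx m _).symm.trans
      (h2.trans (pushF_pushFinv f (Yc β) hyb hx m _))
  · -- injectivity of iStar0 when k = 0
    intro hk a a'
    induction a using Quot.ind with | _ p => ?_
    induction a' using Quot.ind with | _ p' => ?_
    intro heq
    have hj : Joined (p : X) (p' : X) := Pi0.joined_of_eq rfl rfl heq
    obtain ⟨γ⟩ := hj
    obtain ⟨β, hβ, hr⟩ := pick (Set.range fun s => f (γ s))
      (isCompact_range (f.continuous.comp γ.continuous))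
    have hyb := hyc β hβ
    obtain ⟨d0β, dβ, pd0β, pdβ, injβ, inj0β, exIXβ, exYdβ, exYd0β, exdFβ, exd0Fβ,
      exIF0β, surj0β, diagβ, diag0β⟩ := lev β hβ (xS f (Yc β) hyb hx) (xS_mem f (Yc β) hyb hx)
    have key : Pi0.mk ((fibUp f (Yc β) hyb) p) = Pi0.mk ((fibUp f (Yc β) hyb) p') := by
      apply inj0β hk
      exact Pi0.eq_of_joined rfl rfl
        ⟨⟨⟨fun s => ⟨γ s, hr ⟨s, rfl⟩⟩, γ.continuous.subtype_mk _⟩,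
          Subtype.ext γ.source, Subtype.ext γ.target⟩⟩
    have h2 := congrArg (pushF0 f (Yc β) hyb) key
    rwa [pushF0_up f (Yc β) hyb, pushF0_up f (Yc β) hyb] at h2
  · -- exactness at π_{q+1}(X)
    intro q hq b
    refine ⟨?_, ?_⟩
    · rintro ⟨a, rfl⟩
      exact fStarAbs_iStar f hx q a
    · induction b using Quot.ind with | _ g => ?_
      intro hb
      obtain ⟨H, h0, h1, hA, hJ⟩ := RelPi.htpy_of_eq rfl rfl hb
      obtain ⟨β, hβ, hr⟩ := pick (Set.range H) (isCompact_range H.continuous)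
      have hyb := hyc β hβ
      have hgm : ∀ t, f (g.toFun t) ∈ Yc β := fun t => by
        have h0t : f (g.toFun t) = H (0, t) := (h0 t).symm
        rw [h0t]; exact hr ⟨(0, t), rfl⟩
      obtain ⟨gS, hval, hpush⟩ := liftX f (Yc β) hyb hx q g hgm
      obtain ⟨d0β, dβ, pd0β, pdβ, injβ, inj0β, exIXβ, exYdβ, exYd0β, exdFβ, exd0Fβ,
        exIF0β, surj0β, diagβ, diag0β⟩ := lev β hβ (xS f (Yc β) hyb hx) (xS_mem f (Yc β) hyb hx)
      have habs : fStarAbs (restrictMap f (Yc β)) (xS_mem f (Yc β) hyb hx) q (Quot.mk _ gS)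
          = RelPi.base q (Set.mem_singleton _) := by
        refine RelPi.eq_of_htpy rfl rfl
          ⟨⟨fun p => ⟨H p, hr ⟨p, rfl⟩⟩, H.continuous.subtype_mk _⟩,
            fun t => ?_, fun t => ?_, fun s t ht => ?_, fun s t ht => ?_⟩
        · refine Subtype.ext ?_
          show H (0, t) = f ((gS.toFun t : X))
          rw [hval t]; exact h0 t
        · exact Subtype.ext (h1 t)
        · exact Set.mem_singleton_iff.2 (Subtype.ext (hA s t ht))
        · exact Subtype.ext (hJ s t ht)
      obtain ⟨aβ, haβ⟩ := (exIXβ q hq (Quot.mk _ gS)).2 habs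
      refine ⟨pushF f (Yc β) hyb hx q aβ, ?_⟩
      rw [C3 f (Yc β) hyb hx q, haβ]
      exact hpush
  · -- exactness at π_{q+2}(Y)
    intro q hq c
    dsimp only
    refine ⟨?_, ?_⟩
    · rintro ⟨a, rfl⟩
      have hc : ∃ α : RelPi (q + 1) X (fiber f y) x,
          fStarRel f hx (q + 1) α = fStarAbs f hx (q + 1) a :=
        ⟨jStar f hx (q + 1) a, fStarRel_jStar f hx (q + 1) a⟩
      rw [dif_pos hc]
      exact (W q hq _ _ ((Classical.choose_spec hc).trans
        (fStarRel_jStar f hx (q + 1) a).symm)).trans (boundary_jStar f hx q a)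
    · intro hdc
      by_cases hc : ∃ α : RelPi (q + 1) X (fiber f y) x, fStarRel f hx (q + 1) α = c
      · rw [dif_pos hc] at hdc
        obtain ⟨G, hG⟩ := Quot.exists_rep (Classical.choose hc : RelPi (q + 1) X (fiber f y) x)
        have hcs := Classical.choose_spec hc
        rw [← hG] at hdc hcs
        obtain ⟨Hf, h0, h1, hA, hJ⟩ := RelPi.htpy_of_eq rfl rfl hdc
        obtain ⟨β, hβ, hr⟩ := pick (Set.range (f.comp G.toFun))
          (isCompact_range (f.comp G.toFun).continuous)
        have hyb := hyc β hβ
        obtain ⟨GS, hval, hpush⟩ := liftRel f (Yc β) hyb hx (q + 1) G (fun t => hr ⟨t, rfl⟩)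
        obtain ⟨d0β, dβ, pd0β, pdβ, injβ, inj0β, exIXβ, exYdβ, exYd0β, exdFβ, exd0Fβ,
          exIF0β, surj0β, diagβ, diag0β⟩ := lev β hβ (xS f (Yc β) hyb hx) (xS_mem f (Yc β) hyb hx)
        have hbd : RelPi.boundary (xS_mem f (Yc β) hyb hx) (Quot.mk _ GS)
            = RelPi.base q (Set.mem_singleton _) := by
          refine RelPi.eq_of_htpy rfl rfl
            ⟨(fibUp f (Yc β) hyb).comp Hf, fun t => ?_, fun t => ?_,
              fun s t ht => ?_, fun s t ht => ?_⟩
          · refine Subtype.ext (Subtype.ext ?_)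
            show ((Hf (0, t) : ↥(fiber f y)) : X) = ((GS.toFun (Fin.cons 0 t) : X))
            rw [hval]
            exact congrArg Subtype.val (h0 t)
          · refine Subtype.ext (Subtype.ext ?_)
            show ((Hf (1, t) : ↥(fiber f y)) : X) = x
            rw [h1 t]; rfl
          · refine Set.mem_singleton_iff.2 (Subtype.ext (Subtype.ext ?_))
            have hst := hA s t ht
            rw [Set.mem_singleton_iff] at hst
            show ((Hf (s, t) : ↥(fiber f y)) : X) = x
            rw [hst]
          · refine Subtype.ext (Subtype.ext ?_)
            show ((Hf (s, t) : ↥(fiber f y)) : X) = x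
            rw [hJ s t ht]
        have hd := diagβ q hq (Quot.mk _ GS)
        rw [hbd] at hd
        obtain ⟨aβ, haβ⟩ := (exYdβ q hq _).2 hd
        refine ⟨pushX f (Yc β) hyb hx (q + 1) aβ, ?_⟩
        rw [← C1 f (Yc β) hyb hx (q + 1) aβ, haβ, ← hcs, ← hpush]
        exact C2 f (Yc β) hyb hx (q + 1) (Quot.mk _ GS)
      · rw [dif_neg hc] at hdc
        exact absurd hdc (Classical.choose_spec (KeyElse q hq c hc)).2
  · -- exactness at π_1(Y)
    intro hq c
    dsimp only
    refine ⟨?_, ?_⟩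
    · rintro ⟨a, rfl⟩
      have hc : ∃ α : RelPi 0 X (fiber f y) x,
          fStarRel f hx 0 α = fStarAbs f hx 0 a :=
        ⟨jStar f hx 0 a, fStarRel_jStar f hx 0 a⟩
      rw [dif_pos hc]
      exact (W0 hq _ _ ((Classical.choose_spec hc).trans
        (fStarRel_jStar f hx 0 a).symm)).trans (boundary0_jStar f hx a)
    · intro hdc
      by_cases hc : ∃ α : RelPi 0 X (fiber f y) x, fStarRel f hx 0 α = c
      · rw [dif_pos hc] at hdc
        obtain ⟨G, hG⟩ := Quot.exists_rep (Classical.choose hc : RelPi 0 X (fiber f y) x)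
        have hcs := Classical.choose_spec hc
        rw [← hG] at hdc hcs
        have hj : Joined (⟨G.toFun (fun _ => 0), G.face_mem _ rfl⟩ : ↥(fiber f y))
            (fiberPt f hx) := Pi0.joined_of_eq rfl rfl hdc
        obtain ⟨γ⟩ := hj
        obtain ⟨β, hβ, hr⟩ := pick (Set.range (f.comp G.toFun))
          (isCompact_range (f.comp G.toFun).continuous)
        have hyb := hyc β hβ
        obtain ⟨GS, hval, hpush⟩ := liftRel f (Yc β) hyb hx 0 G (fun t => hr ⟨t, rfl⟩)
        obtain ⟨d0β, dβ, pd0β, pdβ, injβ, inj0β, exIXβ, exYdβ, exYd0β, exdFβ, exd0Fβ,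
          exIF0β, surj0β, diagβ, diag0β⟩ := lev β hβ (xS f (Yc β) hyb hx) (xS_mem f (Yc β) hyb hx)
        have hbd : RelPi.boundary0 (Quot.mk _ GS)
            = Pi0.mk (fiberPt (restrictMap f (Yc β)) (xS_mem f (Yc β) hyb hx)) := by
          refine Pi0.eq_of_joined rfl rfl
            ⟨((γ.map (fibUp f (Yc β) hyb).continuous).cast ?_ ?_)⟩
          · exact Subtype.ext (Subtype.ext (hval _))
          · exact Subtype.ext (Subtype.ext rfl)
        have hd := diag0β hq (Quot.mk _ GS)
        rw [hbd] at hd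
        obtain ⟨aβ, haβ⟩ := (exYd0β hq _).2 hd
        refine ⟨pushX f (Yc β) hyb hx 0 aβ, ?_⟩
        rw [← C1 f (Yc β) hyb hx 0 aβ, haβ, ← hcs, ← hpush]
        exact C2 f (Yc β) hyb hx 0 (Quot.mk _ GS)
      · rw [dif_neg hc] at hdc
        exact absurd hdc (Classical.choose_spec (KeyElse0 hq c hc)).2
  · -- exactness at π_{q+1}(F)
    intro q hq b
    dsimp only
    refine ⟨?_, ?_⟩
    · rintro ⟨c, rfl⟩
      by_cases hc : ∃ α : RelPi (q + 1) X (fiber f y) x, fStarRel f hx (q + 1) α = c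
      · rw [dif_pos hc]
        exact iStar_boundary f hx q _
      · rw [dif_neg hc]
        exact (Classical.choose_spec (KeyElse q hq c hc)).1
    · intro hb
      obtain ⟨α, hα⟩ := exists_boundary_eq f hx q b hb
      refine ⟨fStarRel f hx (q + 1) α, ?_⟩
      have hc' : ∃ α' : RelPi (q + 1) X (fiber f y) x,
          fStarRel f hx (q + 1) α' = fStarRel f hx (q + 1) α := ⟨α, rfl⟩
      rw [dif_pos hc']
      exact (W q hq _ _ (Classical.choose_spec hc')).trans hα
  · -- exactness at π₀(F)
    intro hq b
    dsimp only
    refine ⟨?_, ?_⟩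
    · rintro ⟨c, rfl⟩
      by_cases hc : ∃ α : RelPi 0 X (fiber f y) x, fStarRel f hx 0 α = c
      · rw [dif_pos hc]
        exact iStar0_boundary0 f hx _
      · rw [dif_neg hc]
        exact (Classical.choose_spec (KeyElse0 hq c hc)).1
    · intro hb
      obtain ⟨α, hα⟩ := exists_boundary0_eq f hx b hb
      refine ⟨fStarRel f hx 0 α, ?_⟩
      have hc' : ∃ α' : RelPi 0 X (fiber f y) x,
          fStarRel f hx 0 α' = fStarRel f hx 0 α := ⟨α, rfl⟩
      rw [dif_pos hc']
      exact (W0 hq _ _ (Classical.choose_spec hc')).trans hα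
  · -- exactness at π₀(X)
    intro b
    refine ⟨?_, ?_⟩
    · rintro ⟨a, rfl⟩
      induction a using Quot.ind with | _ p => ?_
      exact congrArg Pi0.mk (show f (p : X) = y from p.2)
    · induction b using Quot.ind with | _ x' => ?_
      intro hb
      have hj : Joined (f x') y := Pi0.joined_of_eq rfl rfl hb
      obtain ⟨γ⟩ := hj
      obtain ⟨β, hβ, hr⟩ := pick (Set.range γ) (isCompact_range γ.continuous)
      have hyb := hyc β hβ
      have hx'm : x' ∈ f ⁻¹' Yc β := by
        show f x' ∈ Yc β
        rw [← γ.source]; exact hr ⟨0, rfl⟩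
      obtain ⟨d0β, dβ, pd0β, pdβ, injβ, inj0β, exIXβ, exYdβ, exYd0β, exdFβ, exd0Fβ,
        exIF0β, surj0β, diagβ, diag0β⟩ := lev β hβ (xS f (Yc β) hyb hx) (xS_mem f (Yc β) hyb hx)
      have hf0 : fStar0 (restrictMap f (Yc β)) (Pi0.mk (⟨x', hx'm⟩ : ↥(f ⁻¹' Yc β)))
          = Pi0.mk (⟨y, hyb⟩ : ↥(Yc β)) := by
        exact Pi0.eq_of_joined rfl rfl
          ⟨⟨⟨fun s => ⟨γ s, hr ⟨s, rfl⟩⟩, γ.continuous.subtype_mk _⟩,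
            Subtype.ext γ.source, Subtype.ext γ.target⟩⟩
      obtain ⟨aβ, haβ⟩ := (exIF0β (Pi0.mk ⟨x', hx'm⟩)).2 hf0
      refine ⟨pushF0 f (Yc β) hyb aβ, ?_⟩
      rw [C6 f (Yc β) hyb, haβ]
      rfl
  · -- surjectivity on π₀
    intro c
    induction c using Quot.ind with | _ y₁ => ?_
    obtain ⟨x₁, hx₁⟩ := hsurj y₁
    exact ⟨Pi0.mk x₁, congrArg Pi0.mk hx₁⟩
  · -- diagram in positive degrees
    intro q hq α
    dsimp only
    have hc' : ∃ α' : RelPi (q + 1) X (fiber f y) x,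
        fStarRel f hx (q + 1) α' = fStarRel f hx (q + 1) α := ⟨α, rfl⟩
    rw [dif_pos hc']
    exact W q hq _ _ (Classical.choose_spec hc')
  · -- diagram in degree 0
    intro hq α
    dsimp only
    have hc' : ∃ α' : RelPi 0 X (fiber f y) x,
        fStarRel f hx 0 α' = fStarRel f hx 0 α := ⟨α, rfl⟩
    rw [dif_pos hc']
    exact W0 hq _ _ (Classical.choose_spec hc')
end

section
/- Let Y = ⋃_{i∈ℕ} Y_i be a filtration by T₁ subspaces (Y₀ ⊆ Y₁ ⊆ ⋯, Y with the colimit topology). Let Ỹ_i ⊆ Y_i be exhaustive subsets with Ỹ_i ⊆ Ỹ_{i+1}, and set Ỹ = ⋃_i Ỹ_i. If for each i the restriction of f over Y_i is a k-c-quasifibration with respect to Ỹ_i, then f is a k-c-quasifibration with respect to Ỹ. -/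
open Set unitInterval

noncomputable section InfraStatement13

open ContinuousMap

variable {n : ℕ} {Z W V : Type*} [TopologicalSpace Z] [TopologicalSpace W] [TopologicalSpace V]
  {A : Set Z} {z : Z}

theorem relLoop_eq (g g' : RelLoop n Z A z) (h : ∀ t, g.toFun t = g'.toFun t) : g = g' := by
  cases g; cases g'; congr 1; exact ContinuousMap.ext h

theorem relHomotopic_refl (g : RelLoop n Z A z) : RelHomotopic g g :=
  ⟨⟨fun p => g.toFun p.2, g.toFun.continuous.comp continuous_snd⟩,
    fun _ => rfl, fun _ => rfl, fun _ t ht => g.face_mem t ht, fun _ t ht => g.j_eq t ht⟩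

theorem relHomotopic_symm {g g' : RelLoop n Z A z} (h : RelHomotopic g g') :
    RelHomotopic g' g := by
  obtain ⟨H, h0, h1, hA, hJ⟩ := h
  exact ⟨⟨fun p => H (unitInterval.symm p.1, p.2),
      H.continuous.comp ((continuous_symm.comp continuous_fst).prodMk continuous_snd)⟩,
    fun t => by simpa using h1 t, fun t => by simpa using h0 t,
    fun s t ht => hA _ t ht, fun s t ht => hJ _ t ht⟩

theorem relHomotopic_trans {g₀ g₁ g₂ : RelLoop n Z A z} (h : RelHomotopic g₀ g₁)
    (h' : RelHomotopic g₁ g₂) : RelHomotopic g₀ g₂ := by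
  obtain ⟨H, h0, h1, hA, hJ⟩ := h
  obtain ⟨H', h0', h1', hA', hJ'⟩ := h'
  let F : ContinuousMap.Homotopy g₀.toFun g₁.toFun :=
    { toFun := H, map_zero_left := h0, map_one_left := h1 }
  let F' : ContinuousMap.Homotopy g₁.toFun g₂.toFun :=
    { toFun := H', map_zero_left := h0', map_one_left := h1' }
  refine ⟨(F.trans F').toContinuousMap, fun t => (F.trans F').map_zero_left t,
    fun t => (F.trans F').map_one_left t, fun s t ht => ?_, fun s t ht => ?_⟩
  · show (F.trans F') (s, t) ∈ A
    rw [ContinuousMap.Homotopy.trans_apply]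
    split_ifs
    · exact hA _ t ht
    · exact hA' _ t ht
  · show (F.trans F') (s, t) = z
    rw [ContinuousMap.Homotopy.trans_apply]
    split_ifs
    · exact hJ _ t ht
    · exact hJ' _ t ht

theorem relHomotopic_equivalence : Equivalence (@RelHomotopic n Z _ A z) :=
  ⟨relHomotopic_refl, fun h => relHomotopic_symm h, fun h h' => relHomotopic_trans h h'⟩

theorem relPi_eq_iff {g g' : RelLoop n Z A z} :
    (Quot.mk RelHomotopic g : RelPi n Z A z) = Quot.mk RelHomotopic g' ↔ RelHomotopic g g' := by
  rw [Quot.eq]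
  exact relHomotopic_equivalence.eqvGen_iff

theorem relPi_map_mk {B : Set W} {w : W} (f : C(Z, W)) (hAB : Set.MapsTo f A B)
    (hxy : f z = w) (g : RelLoop n Z A z) :
    RelPi.map f hAB hxy (Quot.mk RelHomotopic g) =
      Quot.mk RelHomotopic (RelLoop.map f hAB hxy g) := rfl

/-- Composition-compare lemma for induced maps on `RelPi`. -/
theorem relPi_map_map_eq {B : Set W} {w : W} {CC : Set V} {v : V}
    (f₁ : C(Z, W)) (f₂ : C(W, V)) (f₃ : C(Z, V))
    (h1 : Set.MapsTo f₁ A B) (h1' : f₁ z = w) (h2 : Set.MapsTo f₂ B CC) (h2' : f₂ w = v)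
    (h3 : Set.MapsTo f₃ A CC) (h3' : f₃ z = v) (hpt : ∀ a, f₂ (f₁ a) = f₃ a)
    (c : RelPi n Z A z) :
    RelPi.map f₂ h2 h2' (RelPi.map f₁ h1 h1' c) = RelPi.map f₃ h3 h3' c := by
  induction c using Quot.ind with
  | _ g => exact congrArg (Quot.mk _) (relLoop_eq _ _ fun t => hpt _)

theorem relPi_map_map_self {B : Set W} {w : W}
    (f₁ : C(Z, W)) (f₂ : C(W, Z))
    (h1 : Set.MapsTo f₁ A B) (h1' : f₁ z = w) (h2 : Set.MapsTo f₂ B A) (h2' : f₂ w = z)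
    (hpt : ∀ a, f₂ (f₁ a) = a) (c : RelPi n Z A z) :
    RelPi.map f₂ h2 h2' (RelPi.map f₁ h1 h1' c) = c := by
  induction c using Quot.ind with
  | _ g => exact congrArg (Quot.mk _) (relLoop_eq _ _ fun t => hpt _)

theorem relPi_map_base {B : Set W} {w : W} (f : C(Z, W)) (hAB : Set.MapsTo f A B)
    (hxy : f z = w) (hz : z ∈ A) (hw : w ∈ B) :
    RelPi.map (n := n) f hAB hxy (RelPi.base n hz) = RelPi.base n hw := by
  show Quot.mk _ _ = Quot.mk _ _
  exact congrArg (Quot.mk _) (relLoop_eq _ _ fun _ => hxy)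

theorem pi0_map_mk (f : C(Z, W)) (a : Z) : Pi0.map f (Pi0.mk a) = Pi0.mk (f a) := rfl

theorem pi0_mk_eq_iff {a b : Z} : Pi0.mk a = Pi0.mk b ↔ Joined a b :=
  ⟨fun h => Quotient.exact' h, fun h => Quotient.sound' h⟩

theorem pi0_map_map_self (f₁ : C(Z, W)) (f₂ : C(W, Z)) (hpt : ∀ a, f₂ (f₁ a) = a)
    (c : Pi0 Z) : Pi0.map f₂ (Pi0.map f₁ c) = c := by
  induction c using Quot.ind with
  | _ a =>
    show Pi0.mk (f₂ (f₁ a)) = Pi0.mk a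
    rw [hpt]

/-! Cube and `inJ` lemmas. -/

theorem continuous_consHead {n : ℕ} :
    Continuous fun p : unitInterval × Cube (n + 1) => (Fin.cons p.1 p.2 : Cube (n + 2)) := by
  refine continuous_pi fun i => ?_
  refine Fin.cases ?_ (fun j => ?_) i
  · simpa using continuous_fst
  · simp only [Fin.cons_succ]
    exact (continuous_apply j).comp continuous_snd

theorem cons_inJ_of_zero {n : ℕ} (s : unitInterval) {t : Cube (n + 1)} (ht : t 0 = 0) :
    inJ (Fin.cons s t : Cube (n + 2)) :=
  ⟨Fin.succ 0, Or.inr ⟨Fin.succ_ne_zero 0, by simpa using ht⟩⟩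

theorem cons_inJ_of_inJ {n : ℕ} (s : unitInterval) {t : Cube (n + 1)} (ht : inJ t) :
    inJ (Fin.cons s t : Cube (n + 2)) := by
  obtain ⟨i, hi | ⟨hi0, hi⟩⟩ := ht
  · exact ⟨i.succ, Or.inl (by simpa using hi)⟩
  · exact ⟨i.succ, Or.inr ⟨Fin.succ_ne_zero i, by simpa using hi⟩⟩

theorem cons_one_inJ {n : ℕ} (t : Cube (n + 1)) : inJ (Fin.cons 1 t : Cube (n + 2)) :=
  ⟨0, Or.inl (Fin.cons_zero _ _)⟩

theorem inJ_elim {n : ℕ} {t : Cube (n + 2)} (ht : inJ t) :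
    t 0 = 1 ∨ Fin.tail t 0 = 0 ∨ inJ (Fin.tail t) := by
  obtain ⟨i, hi⟩ := ht
  refine Fin.cases ?_ (fun j hj => ?_) i hi
  · rintro (h | ⟨h0, _⟩)
    · exact Or.inl h
    · exact absurd rfl h0
  · rcases hj with h | ⟨_, h⟩
    · exact Or.inr (Or.inr ⟨j, Or.inl h⟩)
    · by_cases hj0 : j = 0
      · subst hj0; exact Or.inr (Or.inl h)
      · exact Or.inr (Or.inr ⟨j, Or.inr ⟨hj0, h⟩⟩)

theorem inJ_one {t : Cube 1} (ht : inJ t) : t 0 = 1 := by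
  obtain ⟨i, hi⟩ := ht
  have : i = 0 := Fin.eq_zero i
  subst this
  rcases hi with h | ⟨h0, _⟩
  · exact h
  · exact absurd rfl h0

theorem continuous_tail {n : ℕ} : Continuous fun t : Cube (n + 1) => Fin.tail t :=
  continuous_pi fun j => continuous_apply j.succ

/-! The key compactness lemma. -/

theorem key_compact {Y : Type*} [TopologicalSpace Y]
    (Yi : ℕ → Set Y) (hmono : Monotone Yi) (hunion : (⋃ i, Yi i) = Set.univ)
    (hcolim : ∀ A : Set Y, IsClosed A ↔ ∀ i, IsClosed (Subtype.val ⁻¹' A : Set ↥(Yi i)))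
    (hT1 : ∀ i, T1Space ↥(Yi i))
    {K : Set Y} (hK : IsCompact K) : ∃ i, K ⊆ Yi i := by
  by_contra hcon
  push_neg at hcon
  choose g hgK hgn using fun i => Set.not_subset.mp (hcon i)
  -- every subset of the range of `g` is closed
  have hclosed : ∀ T : Set Y, T ⊆ Set.range g → IsClosed T := by
    intro T hT
    rw [hcolim]
    intro i
    haveI := hT1 i
    have hpre : Set.Finite (Subtype.val ⁻¹' T : Set ↥(Yi i)) := by
      have hfin : Set.Finite (T ∩ Yi i) := by
        refine Set.Finite.subset ((Set.finite_Iio i).image g) ?_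
        rintro yy ⟨hyT, hyi⟩
        obtain ⟨m, rfl⟩ := hT hyT
        refine ⟨m, ?_, rfl⟩
        by_contra hm
        exact hgn m (hmono (not_lt.mp hm) hyi)
      have himg : Set.Finite (Subtype.val '' (Subtype.val ⁻¹' T : Set ↥(Yi i))) :=
        hfin.subset (by rintro yy ⟨a, ha, rfl⟩; exact ⟨ha, a.2⟩)
      exact Set.Finite.of_finite_image himg (Subtype.val_injective.injOn)
    exact hpre.isClosed
  -- the range of `g` is infinite
  have hinf : (Set.range g).Infinite := by
    intro hfin
    have : ∀ yy : Y, Set.Finite {m | g m = yy} := by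
      intro yy
      have : yy ∈ ⋃ i, Yi i := hunion ▸ Set.mem_univ yy
      obtain ⟨m0, hm0⟩ := Set.mem_iUnion.mp this
      refine Set.Finite.subset (Set.finite_Iio m0) ?_
      intro m hm
      by_contra hmlt
      rw [Set.mem_setOf_eq] at hm
      exact hgn m (hm ▸ hmono (not_lt.mp hmlt) hm0)
    have : Set.Finite (⋃ yy ∈ Set.range g, {m | g m = yy}) :=
      Set.Finite.biUnion hfin fun yy _ => this yy
    have huniv : (⋃ yy ∈ Set.range g, {m | g m = yy}) = Set.univ := by
      ext m; simp only [Set.mem_iUnion, Set.mem_univ, iff_true]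
      exact ⟨g m, ⟨m, rfl⟩, rfl⟩
    rw [huniv] at this
    exact Set.infinite_univ this
  -- range g is compact and discrete, hence finite
  have hsub : Set.range g ⊆ K := by rintro yy ⟨m, rfl⟩; exact hgK m
  have hScpt : IsCompact (Set.range g) :=
    hK.of_isClosed_subset (hclosed _ subset_rfl) hsub
  -- cover by complements of `range g \ {y}`
  have hfin : (Set.range g).Finite := by
    have hcover : Set.range g ⊆ ⋃ y : ↥(Set.range g), (Set.range g \ {y.1})ᶜ := by
      intro yy hyy
      exact Set.mem_iUnion.mpr ⟨⟨yy, hyy⟩, fun hc => hc.2 rfl⟩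
    obtain ⟨t, ht⟩ := hScpt.elim_finite_subcover
      (fun y : ↥(Set.range g) => (Set.range g \ {y.1})ᶜ)
      (fun y => (hclosed _ (Set.diff_subset)).isOpen_compl) hcover
    refine Set.Finite.subset (t.finite_toSet.image Subtype.val) ?_
    intro yy hyy
    obtain ⟨y, hyt, hy⟩ := Set.mem_iUnion₂.mp (ht hyy)
    have : yy = y.1 := by
      by_contra hne
      exact hy ⟨hyy, hne⟩
    exact ⟨y, hyt, this.symm⟩
  exact hinf hfin

/-! Restriction and transfer machinery. -/

/-- Restrict a relative loop to a subspace containing its image. -/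
def restrictRelLoop {n : ℕ} {Z : Type*} [TopologicalSpace Z] {A : Set Z} {z : Z}
    (g : RelLoop n Z A z) (S : Set Z) (hS : ∀ t, g.toFun t ∈ S) (B : Set ↥S)
    (hB : ∀ w (hw : w ∈ S), w ∈ A → (⟨w, hw⟩ : ↥S) ∈ B) (z' : ↥S) (hz' : z'.1 = z) :
    RelLoop n (↥S) B z' where
  toFun := ⟨fun t => ⟨g.toFun t, hS t⟩, g.toFun.continuous.subtype_mk _⟩
  face_mem := fun t ht => hB _ _ (g.face_mem t ht)
  j_eq := fun t ht => Subtype.ext (by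
    show g.toFun t = z'.1
    rw [g.j_eq t ht]; exact hz'.symm)

theorem restrict_push {n : ℕ} {Z : Type*} [TopologicalSpace Z] {A : Set Z} {z : Z}
    (g : RelLoop n Z A z) (S : Set Z) (hS : ∀ t, g.toFun t ∈ S) (B : Set ↥S)
    (hB : ∀ w (hw : w ∈ S), w ∈ A → (⟨w, hw⟩ : ↥S) ∈ B) (z' : ↥S) (hz' : z'.1 = z)
    (hmap : Set.MapsTo (Subtype.val : ↥S → Z) B A) :
    RelPi.map (⟨Subtype.val, continuous_subtype_val⟩ : C(↥S, Z)) hmap hz'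
        (Quot.mk RelHomotopic (restrictRelLoop g S hS B hB z' hz')) =
      Quot.mk RelHomotopic g :=
  congrArg (Quot.mk _) (relLoop_eq _ _ fun _ => rfl)

/-- Transfer a homotopy in the ambient space to the subspace. -/
theorem relHomotopic_subtype {n : ℕ} {Z : Type*} [TopologicalSpace Z] {S : Set Z}
    {B : Set ↥S} {z' : ↥S} (u u' : RelLoop n (↥S) B z')
    (H : C(unitInterval × Cube (n + 1), Z)) (hH : ∀ p, H p ∈ S)
    (h0 : ∀ t, H (0, t) = (u.toFun t).1) (h1 : ∀ t, H (1, t) = (u'.toFun t).1)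
    (hA : ∀ s t, t 0 = 0 → ∀ hp : H (s, t) ∈ S, (⟨H (s, t), hp⟩ : ↥S) ∈ B)
    (hJ : ∀ s t, inJ t → H (s, t) = z'.1) : RelHomotopic u u' :=
  ⟨⟨fun p => ⟨H p, hH p⟩, H.continuous.subtype_mk _⟩,
   fun t => Subtype.ext (h0 t), fun t => Subtype.ext (h1 t),
   fun s t ht => hA s t ht _, fun s t ht => Subtype.ext (hJ s t ht)⟩

theorem joined_subtype {Z : Type*} [TopologicalSpace Z] {S : Set Z} {a b : ↥S}
    (p : Path a.1 b.1) (hp : ∀ s, p s ∈ S) : Joined a b :=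
  ⟨⟨⟨fun s => ⟨p s, hp s⟩, p.continuous.subtype_mk _⟩,
    Subtype.ext p.source, Subtype.ext p.target⟩⟩

/-! Fiber identifications for `restrictMap`. -/

section FiberId

variable {X Y : Type*} [TopologicalSpace X] [TopologicalSpace Y]

def stageFiberIncl (f : C(X, Y)) (S : Set Y) (yS : ↥S) :
    C(↥(fiber (restrictMap f S) yS), ↥(fiber f yS.1)) :=
  ⟨fun a => ⟨a.1.1, congrArg Subtype.val (a.2 : restrictMap f S a.1 = yS)⟩,
    (continuous_subtype_val.comp continuous_subtype_val).subtype_mk _⟩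

def stageFiberProj (f : C(X, Y)) (S : Set Y) (yS : ↥S) :
    C(↥(fiber f yS.1), ↥(fiber (restrictMap f S) yS)) :=
  ⟨fun a => ⟨⟨a.1, show f a.1 ∈ S by rw [show f a.1 = yS.1 from a.2]; exact yS.2⟩,
      Subtype.ext (a.2 : f a.1 = yS.1)⟩,
    (continuous_subtype_val.subtype_mk _).subtype_mk _⟩

theorem stageFiber_incl_proj (f : C(X, Y)) (S : Set Y) (yS : ↥S)
    (a : ↥(fiber f yS.1)) : stageFiberIncl f S yS (stageFiberProj f S yS a) = a :=
  Subtype.ext rfl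

theorem stageFiber_proj_incl (f : C(X, Y)) (S : Set Y) (yS : ↥S)
    (a : ↥(fiber (restrictMap f S) yS)) : stageFiberProj f S yS (stageFiberIncl f S yS a) = a :=
  Subtype.ext (Subtype.ext rfl)

end FiberId

/-! Two global topological lemmas. -/

/-- `i_* ∘ ∂ = const base`. -/
theorem iStar_boundary_eq_base {n : ℕ} {Z : Type*} [TopologicalSpace Z] {A : Set Z} {z : Z}
    (hz : z ∈ A) (g : RelLoop (n + 1) Z A z)
    (hmap : Set.MapsTo (Subtype.val : ↥A → Z) {(⟨z, hz⟩ : ↥A)} ({z} : Set Z)) :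
    RelPi.map (⟨Subtype.val, continuous_subtype_val⟩ : C(↥A, Z)) hmap rfl
        (Quot.mk RelHomotopic (RelLoop.boundary hz g)) =
      RelPi.base n (Set.mem_singleton z) := by
  refine Quot.sound ⟨⟨fun p => g.toFun (Fin.cons p.1 p.2),
    g.toFun.continuous.comp continuous_consHead⟩, fun t => rfl, fun t => ?_,
    fun s t ht => ?_, fun s t ht => ?_⟩
  · exact g.j_eq _ (cons_one_inJ t)
  · exact g.j_eq _ (cons_inJ_of_zero s ht)
  · exact g.j_eq _ (cons_inJ_of_inJ s ht)

/-- A nullhomotopy in `Z` of a loop in `A` gives a relative class with that boundary. -/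
def nullToRel {n : ℕ} {Z : Type*} [TopologicalSpace Z] {A : Set Z} {z : Z} (hz : z ∈ A)
    (u : RelLoop n (↥A) {(⟨z, hz⟩ : ↥A)} ⟨z, hz⟩)
    (H : C(unitInterval × Cube (n + 1), Z))
    (h0 : ∀ t, H (0, t) = (u.toFun t).1) (h1 : ∀ t, H (1, t) = z)
    (hA : ∀ s t, t 0 = 0 → H (s, t) ∈ ({z} : Set Z))
    (hJ : ∀ s t, inJ t → H (s, t) = z) : RelLoop (n + 1) Z A z where
  toFun := ⟨fun t => H (t 0, Fin.tail t),
    H.continuous.comp ((continuous_apply 0).prodMk continuous_tail)⟩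
  face_mem := fun t ht => by
    show H (t 0, Fin.tail t) ∈ A
    rw [ht, h0]
    exact (u.toFun (Fin.tail t)).2
  j_eq := fun t ht => by
    show H (t 0, Fin.tail t) = z
    rcases inJ_elim ht with h | h | h
    · rw [h]; exact h1 _
    · exact hA _ _ h
    · exact hJ _ _ h

theorem boundary_nullToRel {n : ℕ} {Z : Type*} [TopologicalSpace Z] {A : Set Z} {z : Z}
    (hz : z ∈ A) (u : RelLoop n (↥A) {(⟨z, hz⟩ : ↥A)} ⟨z, hz⟩)
    (H : C(unitInterval × Cube (n + 1), Z))
    (h0 : ∀ t, H (0, t) = (u.toFun t).1) (h1 : ∀ t, H (1, t) = z)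
    (hA : ∀ s t, t 0 = 0 → H (s, t) ∈ ({z} : Set Z))
    (hJ : ∀ s t, inJ t → H (s, t) = z) :
    RelPi.boundary hz (Quot.mk RelHomotopic (nullToRel hz u H h0 h1 hA hJ)) =
      Quot.mk RelHomotopic u := by
  refine congrArg (Quot.mk _) (relLoop_eq _ _ fun t => Subtype.ext ?_)
  show H ((Fin.cons 0 t : Cube (n + 2)) 0, Fin.tail (Fin.cons 0 t : Cube (n + 2))) =
    (u.toFun t).1
  rw [show (Fin.cons 0 t : Cube (n + 2)) 0 = 0 from Fin.cons_zero _ _,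
    show Fin.tail (Fin.cons 0 t : Cube (n + 2)) = t from Fin.tail_cons _ _]
  exact h0 t

theorem pi0_map_map_eq {Z W V : Type*} [TopologicalSpace Z] [TopologicalSpace W]
    [TopologicalSpace V] (f₁ : C(Z, W)) (f₂ : C(W, V)) (f₃ : C(Z, V))
    (hpt : ∀ a, f₂ (f₁ a) = f₃ a) (c : Pi0 Z) :
    Pi0.map f₂ (Pi0.map f₁ c) = Pi0.map f₃ c := by
  induction c using Quot.ind with
  | _ a =>
    show Pi0.mk (f₂ (f₁ a)) = Pi0.mk (f₃ a)
    rw [hpt]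

section GlobalD

variable {X Y : Type*} [TopologicalSpace X] [TopologicalSpace Y]

open Classical in
/-- The global connecting map `∂ ∘ (f_*)⁻¹` (with junk values off the image of `f_*`). -/
def globalD (f : C(X, Y)) {y : Y} {x : X} (hx : x ∈ fiber f y) (q : ℕ)
    (b : RelPi (q + 1) Y ({y} : Set Y) y) :
    RelPi q ↥(fiber f y) {fiberPt f hx} (fiberPt f hx) :=
  if hb : ∃ α : RelPi (q + 1) X (fiber f y) x, fStarRel f hx (q + 1) α = b then
    id (RelPi.boundary hx hb.choose)
  else if hc : ∃ c : RelPi q ↥(fiber f y) {fiberPt f hx} (fiberPt f hx),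
      iStar f hx q c = RelPi.base q (Set.mem_singleton x) ∧
      c ≠ RelPi.base q (Set.mem_singleton (fiberPt f hx)) then hc.choose
  else RelPi.base q (Set.mem_singleton (fiberPt f hx))

open Classical in
/-- The global connecting map in degree `0`. -/
def globalD0 (f : C(X, Y)) {y : Y} {x : X} (hx : x ∈ fiber f y)
    (b : RelPi 0 Y ({y} : Set Y) y) : Pi0 ↥(fiber f y) :=
  if hb : ∃ α : RelPi 0 X (fiber f y) x, fStarRel f hx 0 α = b then
    RelPi.boundary0 hb.choose
  else if hc : ∃ c : Pi0 ↥(fiber f y),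
      iStar0 f y c = Pi0.mk x ∧ c ≠ Pi0.mk (fiberPt f hx) then hc.choose
  else Pi0.mk (fiberPt f hx)

end GlobalD

end InfraStatement13

/-- Let `Y = ⋃ Y_i` be a filtration by `T₁` subspaces, `Y` carrying the
colimit topology, with exhaustive subsets `Ỹ_i ⊆ Y_i`, `Ỹ_i ⊆ Ỹ_{i+1}`. If for each `i`
the restriction of `f` over `Y_i` is a `k`-`c`-quasifibration with respect to `Ỹ_i`,
then `f` is a `k`-`c`-quasifibration with respect to `Ỹ = ⋃ Ỹ_i`. -/
theorem statement13 {X Y : Type*} [TopologicalSpace X] [TopologicalSpace Y]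
    (f : C(X, Y)) (hsurj : Function.Surjective f) (k : ℕ)
    (Yi : ℕ → Set Y) (hmono : Monotone Yi) (hunion : (⋃ i, Yi i) = Set.univ)
    (hcolim : ∀ A : Set Y, IsClosed A ↔ ∀ i, IsClosed (Subtype.val ⁻¹' A : Set ↥(Yi i)))
    (hT1 : ∀ i, T1Space ↥(Yi i))
    (Yti : ℕ → Set Y) (hexh : ∀ i, ExhaustiveIn (Yti i) (Yi i))
    (hmono' : ∀ i, Yti i ⊆ Yti (i + 1))
    (hdist : ∀ i, KCDistinguished k f (Yi i) (Yti i)) :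
    IsKCQuasifibRel k f (⋃ i, Yti i) := by
  classical
  intro y hy x hx
  obtain ⟨i0, hy0⟩ := Set.mem_iUnion.mp hy
  have hfx : f x = y := hx
  have hYti : ∀ {i j : ℕ}, i ≤ j → Yti i ⊆ Yti j := by
    intro i j hij
    induction hij with
    | refl => exact subset_rfl
    | step _ ih => exact fun a ha => hmono' _ (ih ha)
  have hyt : ∀ m, i0 ≤ m → y ∈ Yti m := fun m hm => hYti hm hy0
  have hymem : ∀ m, i0 ≤ m → y ∈ Yi m := fun m hm => (hexh m).1 (hyt m hm)
  have hxm : ∀ m, i0 ≤ m → x ∈ f ⁻¹' Yi m := fun m hm => by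
    show f x ∈ Yi m; rw [hfx]; exact hymem m hm
  have hcpt : ∀ (K : Set Y), IsCompact K → ∃ m, i0 ≤ m ∧ K ⊆ Yi m := fun K hK => by
    obtain ⟨i, hi⟩ := key_compact Yi hmono hunion hcolim hT1 hK
    exact ⟨max i i0, le_max_right _ _, hi.trans (hmono (le_max_left _ _))⟩
  have hstage : ∀ m (hm : i0 ≤ m),
      IsKCQuasifibAt k (restrictMap f (Yi m)) ⟨y, hymem m hm⟩ :=
    fun m hm => hdist m ⟨y, hymem m hm⟩ (hyt m hm)
  have hxfib : ∀ m (hm : i0 ≤ m),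
      (⟨x, hxm m hm⟩ : ↥(f ⁻¹' Yi m)) ∈ fiber (restrictMap f (Yi m)) ⟨y, hymem m hm⟩ :=
    fun m hm => Subtype.ext hfx
  -- well-definedness of `∂ ∘ (f_*)⁻¹` in degrees `q + 1 < k`
  have hwd : ∀ q (hqk : q + 1 < k) (α α' : RelPi (q + 1) X (fiber f y) x),
      fStarRel f hx (q + 1) α = fStarRel f hx (q + 1) α' →
      RelPi.boundary hx α = RelPi.boundary hx α' := by
    intro q hqk α α'
    induction α using Quot.ind with | _ g => ?_
    induction α' using Quot.ind with | _ g' => ?_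
    intro heq
    replace heq : RelHomotopic (RelLoop.map f (fun _ ha => ha) hx g)
        (RelLoop.map f (fun _ ha => ha) hx g') := relPi_eq_iff.mp heq
    obtain ⟨H, h0, h1, hA, hJ⟩ := heq
    obtain ⟨m, hm, hKm⟩ := hcpt (Set.range H) (isCompact_range H.continuous)
    have hHS : ∀ p, H p ∈ Yi m := fun p => hKm ⟨p, rfl⟩
    have hgS : ∀ t, g.toFun t ∈ f ⁻¹' Yi m := fun t => by
      show f (g.toFun t) ∈ Yi m
      rw [show f (g.toFun t) = H (0, t) from (h0 t).symm]
      exact hHS _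
    have hg'S : ∀ t, g'.toFun t ∈ f ⁻¹' Yi m := fun t => by
      show f (g'.toFun t) ∈ Yi m
      rw [show f (g'.toFun t) = H (1, t) from (h1 t).symm]
      exact hHS _
    set yS : ↥(Yi m) := ⟨y, hymem m hm⟩ with hyS
    have hB : ∀ w (hw : w ∈ f ⁻¹' Yi m), w ∈ fiber f y →
        (⟨w, hw⟩ : ↥(f ⁻¹' Yi m)) ∈ fiber (restrictMap f (Yi m)) yS :=
      fun w hw hwA => Subtype.ext hwA
    set gm := restrictRelLoop g (f ⁻¹' Yi m) hgS _ hB ⟨x, hxm m hm⟩ rfl with hgm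
    set g'm := restrictRelLoop g' (f ⁻¹' Yi m) hg'S _ hB ⟨x, hxm m hm⟩ rfl with hg'm
    obtain ⟨d0m, dm, p1, p2, p3, p4, p5, p6, p7, p8, p9, p10, p11, p12, p13⟩ :=
      hstage m hm ⟨x, hxm m hm⟩ (hxfib m hm)
    -- the two stage relative classes have the same image in `π (Y_m)`
    have hstageeq : fStarRel (restrictMap f (Yi m)) (hxfib m hm) (q + 1)
          (Quot.mk RelHomotopic gm) =
        fStarRel (restrictMap f (Yi m)) (hxfib m hm) (q + 1) (Quot.mk RelHomotopic g'm) := by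
      refine Quot.sound (relHomotopic_subtype _ _ H hHS ?_ ?_ ?_ ?_)
      · exact fun t => h0 t
      · exact fun t => h1 t
      · exact fun s t ht hp => Subtype.ext (hA s t ht)
      · exact fun s t ht => hJ s t ht
    have hd1 := p12 q hqk (Quot.mk RelHomotopic gm)
    have hd2 := p12 q hqk (Quot.mk RelHomotopic g'm)
    rw [hstageeq] at hd1
    have hbdeq : RelPi.boundary (hxfib m hm) (Quot.mk RelHomotopic gm) =
        RelPi.boundary (hxfib m hm) (Quot.mk RelHomotopic g'm) := hd1.symm.trans hd2
    -- push back to the global fiber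
    have hmape : Set.MapsTo (stageFiberIncl f (Yi m) yS)
        {fiberPt (restrictMap f (Yi m)) (hxfib m hm)} {fiberPt f hx} := by
      rintro a ha
      rw [Set.mem_singleton_iff] at ha ⊢
      rw [ha]
      exact Subtype.ext rfl
    have hpte : stageFiberIncl f (Yi m) yS (fiberPt (restrictMap f (Yi m)) (hxfib m hm)) =
        fiberPt f hx := Subtype.ext rfl
    have hpush : ∀ (gg : RelLoop (q + 1) X (fiber f y) x) (hS : ∀ t, gg.toFun t ∈ f ⁻¹' Yi m),
        RelPi.map (stageFiberIncl f (Yi m) yS) hmape hpte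
            (RelPi.boundary (hxfib m hm)
              (Quot.mk RelHomotopic (restrictRelLoop gg (f ⁻¹' Yi m) hS _ hB ⟨x, hxm m hm⟩ rfl))) =
          RelPi.boundary hx (Quot.mk RelHomotopic gg) :=
      fun gg hS => congrArg (Quot.mk _) (relLoop_eq _ _ fun t => Subtype.ext rfl)
    rw [← hpush g hgS, ← hpush g' hg'S, hbdeq]
  -- well-definedness in degree 0
  have hwd0 : 0 < k → ∀ (α α' : RelPi 0 X (fiber f y) x),
      fStarRel f hx 0 α = fStarRel f hx 0 α' →
      RelPi.boundary0 α = RelPi.boundary0 α' := by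
    intro hk α α'
    induction α using Quot.ind with | _ g => ?_
    induction α' using Quot.ind with | _ g' => ?_
    intro heq
    replace heq : RelHomotopic (RelLoop.map f (fun _ ha => ha) hx g)
        (RelLoop.map f (fun _ ha => ha) hx g') := relPi_eq_iff.mp heq
    obtain ⟨H, h0, h1, hA, hJ⟩ := heq
    obtain ⟨m, hm, hKm⟩ := hcpt (Set.range H) (isCompact_range H.continuous)
    have hHS : ∀ p, H p ∈ Yi m := fun p => hKm ⟨p, rfl⟩
    have hgS : ∀ t, g.toFun t ∈ f ⁻¹' Yi m := fun t => by
      show f (g.toFun t) ∈ Yi m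
      rw [show f (g.toFun t) = H (0, t) from (h0 t).symm]; exact hHS _
    have hg'S : ∀ t, g'.toFun t ∈ f ⁻¹' Yi m := fun t => by
      show f (g'.toFun t) ∈ Yi m
      rw [show f (g'.toFun t) = H (1, t) from (h1 t).symm]; exact hHS _
    have hB : ∀ w (hw : w ∈ f ⁻¹' Yi m), w ∈ fiber f y →
        (⟨w, hw⟩ : ↥(f ⁻¹' Yi m)) ∈ fiber (restrictMap f (Yi m)) ⟨y, hymem m hm⟩ :=
      fun w hw hwA => Subtype.ext hwA
    obtain ⟨d0m, dm, p1m, p2m, p3m, p4m, p5m, p6m, p7m, p8m, p9m, p10m, p11m, p12m, p13m⟩ :=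
      hstage m hm ⟨x, hxm m hm⟩ (hxfib m hm)
    have hstageeq : fStarRel (restrictMap f (Yi m)) (hxfib m hm) 0
          (Quot.mk RelHomotopic (restrictRelLoop g (f ⁻¹' Yi m) hgS _ hB ⟨x, hxm m hm⟩ rfl)) =
        fStarRel (restrictMap f (Yi m)) (hxfib m hm) 0
          (Quot.mk RelHomotopic (restrictRelLoop g' (f ⁻¹' Yi m) hg'S _ hB ⟨x, hxm m hm⟩ rfl)) :=
      Quot.sound (relHomotopic_subtype _ _ H hHS (fun t => h0 t) (fun t => h1 t)
        (fun s t ht hp => Subtype.ext (hA s t ht)) (fun s t ht => hJ s t ht))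
    have hd1 := p13m hk
      (Quot.mk RelHomotopic (restrictRelLoop g (f ⁻¹' Yi m) hgS _ hB ⟨x, hxm m hm⟩ rfl))
    have hd2 := p13m hk
      (Quot.mk RelHomotopic (restrictRelLoop g' (f ⁻¹' Yi m) hg'S _ hB ⟨x, hxm m hm⟩ rfl))
    rw [hstageeq] at hd1
    have hbdeq := hd1.symm.trans hd2
    have hpush : ∀ (gg : RelLoop 0 X (fiber f y) x) (hS : ∀ t, gg.toFun t ∈ f ⁻¹' Yi m),
        Pi0.map (stageFiberIncl f (Yi m) ⟨y, hymem m hm⟩)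
            (RelPi.boundary0
              (Quot.mk RelHomotopic (restrictRelLoop gg (f ⁻¹' Yi m) hS _ hB ⟨x, hxm m hm⟩ rfl))) =
          RelPi.boundary0 (Quot.mk RelHomotopic gg) :=
      fun gg hS => congrArg Pi0.mk (Subtype.ext rfl)
    rw [← hpush g hgS, ← hpush g' hg'S, hbdeq]
  -- shared computations
  have hGbase : ∀ qq, fStarRel f hx qq (RelPi.base qq hx) =
      RelPi.base qq (Set.mem_singleton y) :=
    fun qq => relPi_map_base f (fun _ ha => ha) hx hx (Set.mem_singleton y)
  have hfj : ∀ qq (a : RelPi qq X ({x} : Set X) x),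
      fStarRel f hx qq (jStar f hx qq a) = fStarAbs f hx qq a :=
    fun qq a => relPi_map_map_eq (ContinuousMap.id X) f f
      (fun b hb => by rw [Set.mem_singleton_iff] at hb; rw [hb]; exact hx) rfl
      (fun _ ha => ha) hfx
      (fun b hb => by rw [Set.mem_singleton_iff] at hb ⊢; rw [hb]; exact hfx) hfx
      (fun _ => rfl) a
  have hbb : ∀ qq, RelPi.boundary hx (RelPi.base (qq + 1) hx) =
      RelPi.base qq (Set.mem_singleton (fiberPt f hx)) :=
    fun qq => congrArg (Quot.mk _) (relLoop_eq _ _ fun t => Subtype.ext rfl)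
  have hbj : ∀ qq (a : RelPi (qq + 1) X ({x} : Set X) x),
      RelPi.boundary hx (jStar f hx (qq + 1) a) =
        RelPi.base qq (Set.mem_singleton (fiberPt f hx)) := by
    intro qq a
    induction a using Quot.ind with | _ g => ?_
    exact congrArg (Quot.mk _) (relLoop_eq _ _ fun t =>
      Subtype.ext (g.face_mem _ (consZero_face t)))
  have hbb0 : RelPi.boundary0 (RelPi.base 0 hx) = Pi0.mk (fiberPt f hx) :=
    congrArg Pi0.mk (Subtype.ext rfl)
  have hbj0 : ∀ a : RelPi 0 X ({x} : Set X) x,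
      RelPi.boundary0 (jStar f hx 0 a) = Pi0.mk (fiberPt f hx) := by
    intro a
    induction a using Quot.ind with | _ g => ?_
    exact congrArg Pi0.mk (Subtype.ext (g.face_mem _ rfl))
  have hiBd : ∀ qq (α : RelPi (qq + 1) X (fiber f y) x),
      iStar f hx qq (RelPi.boundary hx α) = RelPi.base qq (Set.mem_singleton x) := by
    intro qq α
    induction α using Quot.ind with | _ g => ?_
    exact iStar_boundary_eq_base hx g
      (fun a ha => by rw [Set.mem_singleton_iff] at ha; subst ha; rfl)
  have hiBd0 : ∀ α : RelPi 0 X (fiber f y) x,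
      iStar0 f y (RelPi.boundary0 α) = Pi0.mk x := by
    intro α
    induction α using Quot.ind with | _ g => ?_
    show Pi0.mk (g.toFun (fun _ => 0)) = Pi0.mk x
    exact pi0_mk_eq_iff.mpr ⟨⟨⟨fun s => g.toFun (fun _ => s),
      g.toFun.continuous.comp (continuous_pi fun _ => continuous_id)⟩, rfl,
      g.j_eq _ ⟨0, Or.inl rfl⟩⟩⟩
  have hiBase : iStar0 f y (Pi0.mk (fiberPt f hx)) = Pi0.mk x := rfl
  refine ⟨fun _ => globalD0 f hx, fun q _ => globalD f hx q,
    ?_, ?_, ?_, ?_, ?_, ?_, ?_, ?_, ?_, ?_, ?_, ?_, ?_⟩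
  · -- p1 : d0 pointed
    intro hk
    have hb : ∃ α : RelPi 0 X (fiber f y) x,
        fStarRel f hx 0 α = RelPi.base 0 (Set.mem_singleton y) :=
      ⟨RelPi.base 0 hx, hGbase 0⟩
    show globalD0 f hx (RelPi.base 0 (Set.mem_singleton y)) = Pi0.mk (fiberPt f hx)
    unfold globalD0
    rw [dif_pos hb,
      hwd0 hk hb.choose (RelPi.base 0 hx) (hb.choose_spec.trans (hGbase 0).symm), hbb0]
  · -- p2 : d pointed
    intro q hq
    have hb : ∃ α : RelPi (q + 1) X (fiber f y) x,
        fStarRel f hx (q + 1) α = RelPi.base (q + 1) (Set.mem_singleton y) :=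
      ⟨RelPi.base (q + 1) hx, hGbase (q + 1)⟩
    show globalD f hx q (RelPi.base (q + 1) (Set.mem_singleton y)) =
      RelPi.base q (Set.mem_singleton (fiberPt f hx))
    unfold globalD
    rw [dif_pos hb,
      hwd q hq hb.choose (RelPi.base (q + 1) hx) (hb.choose_spec.trans (hGbase (q + 1)).symm),
      hbb q]
    exact rfl
  · -- p3 : injectivity of iStar in top degree
    intro m0 hk c c' hcc
    induction c using Quot.ind with | _ u => ?_
    induction c' using Quot.ind with | _ u' => ?_
    have hmapi : Set.MapsTo (fiberIncl f y) {fiberPt f hx} ({x} : Set X) :=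
      fun a ha => by rw [Set.mem_singleton_iff] at ha ⊢; rw [ha]; rfl
    replace hcc : RelHomotopic
        (RelLoop.map (B := ({x} : Set X)) (fiberIncl f y) hmapi rfl u)
        (RelLoop.map (B := ({x} : Set X)) (fiberIncl f y) hmapi rfl u') :=
      relPi_eq_iff.mp hcc
    obtain ⟨H, h0, h1, hA, hJ⟩ := hcc
    obtain ⟨m, hm, hKm⟩ := hcpt (Set.range (f.comp H)) (isCompact_range (f.comp H).continuous)
    have hHS : ∀ p, H p ∈ f ⁻¹' Yi m := fun p => hKm ⟨p, rfl⟩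
    obtain ⟨d0m, dm, p1m, p2m, p3m, p4m, p5m, p6m, p7m, p8m, p9m, p10m, p11m, p12m, p13m⟩ :=
      hstage m hm ⟨x, hxm m hm⟩ (hxfib m hm)
    have hmapp : Set.MapsTo (stageFiberProj f (Yi m) ⟨y, hymem m hm⟩)
        {fiberPt f hx} {fiberPt (restrictMap f (Yi m)) (hxfib m hm)} :=
      fun a ha => by
        rw [Set.mem_singleton_iff] at ha ⊢; rw [ha]; exact Subtype.ext (Subtype.ext rfl)
    have hptp : stageFiberProj f (Yi m) ⟨y, hymem m hm⟩ (fiberPt f hx) =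
        fiberPt (restrictMap f (Yi m)) (hxfib m hm) := Subtype.ext (Subtype.ext rfl)
    have hmape : Set.MapsTo (stageFiberIncl f (Yi m) ⟨y, hymem m hm⟩)
        {fiberPt (restrictMap f (Yi m)) (hxfib m hm)} {fiberPt f hx} :=
      fun a ha => by rw [Set.mem_singleton_iff] at ha ⊢; rw [ha]; exact Subtype.ext rfl
    have hpte : stageFiberIncl f (Yi m) ⟨y, hymem m hm⟩
        (fiberPt (restrictMap f (Yi m)) (hxfib m hm)) = fiberPt f hx := Subtype.ext rfl
    have hstageeq : iStar (restrictMap f (Yi m)) (hxfib m hm) m0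
          (RelPi.map (stageFiberProj f (Yi m) ⟨y, hymem m hm⟩) hmapp hptp
            (Quot.mk RelHomotopic u)) =
        iStar (restrictMap f (Yi m)) (hxfib m hm) m0
          (RelPi.map (stageFiberProj f (Yi m) ⟨y, hymem m hm⟩) hmapp hptp
            (Quot.mk RelHomotopic u')) :=
      Quot.sound (relHomotopic_subtype _ _ H hHS (fun t => h0 t) (fun t => h1 t)
        (fun s t ht hp => Subtype.ext (hA s t ht)) (fun s t ht => hJ s t ht))
    have hinj := congrArg
      (RelPi.map (stageFiberIncl f (Yi m) ⟨y, hymem m hm⟩) hmape hpte) (p3m m0 hk hstageeq)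
    exact (relPi_map_map_self _ _ hmapp hptp hmape hpte (fun a => Subtype.ext rfl) _).symm.trans
      (hinj.trans (relPi_map_map_self _ _ hmapp hptp hmape hpte (fun a => Subtype.ext rfl) _))
  · -- p4 : injectivity of iStar0 for k = 0
    intro hk c c' hcc
    induction c using Quot.ind with | _ a => ?_
    induction c' using Quot.ind with | _ a' => ?_
    replace hcc : Joined (a : X) (a' : X) := pi0_mk_eq_iff.mp hcc
    obtain ⟨p⟩ := hcc
    obtain ⟨m, hm, hKm⟩ := hcpt (Set.range (f.comp p.toContinuousMap))
      (isCompact_range (f.comp p.toContinuousMap).continuous)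
    have hpS : ∀ s, p s ∈ f ⁻¹' Yi m := fun s => hKm ⟨s, rfl⟩
    obtain ⟨d0m, dm, p1m, p2m, p3m, p4m, p5m, p6m, p7m, p8m, p9m, p10m, p11m, p12m, p13m⟩ :=
      hstage m hm ⟨x, hxm m hm⟩ (hxfib m hm)
    have hstageeq : iStar0 (restrictMap f (Yi m)) ⟨y, hymem m hm⟩
          (Pi0.mk (stageFiberProj f (Yi m) ⟨y, hymem m hm⟩ a)) =
        iStar0 (restrictMap f (Yi m)) ⟨y, hymem m hm⟩
          (Pi0.mk (stageFiberProj f (Yi m) ⟨y, hymem m hm⟩ a')) :=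
      pi0_mk_eq_iff.mpr (joined_subtype p hpS)
    have h2 : ∀ b : ↥(fiber f y),
        Pi0.map (stageFiberIncl f (Yi m) ⟨y, hymem m hm⟩)
          (Pi0.mk (stageFiberProj f (Yi m) ⟨y, hymem m hm⟩ b)) = Pi0.mk b :=
      fun b => congrArg Pi0.mk (Subtype.ext rfl)
    have hinj := congrArg
      (Pi0.map (stageFiberIncl f (Yi m) ⟨y, hymem m hm⟩)) (p4m hk hstageeq)
    rw [h2, h2] at hinj
    exact hinj
  · -- p5 : exactness iStar / fStarAbs
    intro q hq b
    induction b using Quot.ind with | _ g => ?_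
    constructor
    · rintro ⟨a, ha⟩
      rw [← ha]
      induction a using Quot.ind with | _ u => ?_
      exact congrArg (Quot.mk _) (relLoop_eq _ _ fun t => (u.toFun t).2)
    · intro hbase
      have hmapf : Set.MapsTo f ({x} : Set X) ({y} : Set Y) :=
        fun a ha => by rw [Set.mem_singleton_iff] at ha ⊢; rw [ha]; exact hfx
      replace hbase : RelHomotopic (RelLoop.map (B := ({y} : Set Y)) f hmapf hfx g)
          (RelLoop.const q (Set.mem_singleton y)) := relPi_eq_iff.mp hbase
      obtain ⟨H, h0, h1, hA, hJ⟩ := hbase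
      obtain ⟨m, hm, hKm⟩ := hcpt (Set.range H) (isCompact_range H.continuous)
      have hHS : ∀ p, H p ∈ Yi m := fun p => hKm ⟨p, rfl⟩
      have hgS : ∀ t, g.toFun t ∈ f ⁻¹' Yi m := fun t => by
        show f (g.toFun t) ∈ Yi m
        rw [show f (g.toFun t) = H (0, t) from (h0 t).symm]; exact hHS _
      have hBx : ∀ w (hw : w ∈ f ⁻¹' Yi m), w ∈ ({x} : Set X) →
          (⟨w, hw⟩ : ↥(f ⁻¹' Yi m)) ∈
            ({(⟨x, hxm m hm⟩ : ↥(f ⁻¹' Yi m))} : Set ↥(f ⁻¹' Yi m)) :=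
        fun w hw hwA => by rw [Set.mem_singleton_iff] at hwA ⊢; exact Subtype.ext hwA
      obtain ⟨d0m, dm, p1m, p2m, p3m, p4m, p5m, p6m, p7m, p8m, p9m, p10m, p11m, p12m, p13m⟩ :=
        hstage m hm ⟨x, hxm m hm⟩ (hxfib m hm)
      have hstagebase : fStarAbs (restrictMap f (Yi m)) (hxfib m hm) q
            (Quot.mk RelHomotopic (restrictRelLoop g (f ⁻¹' Yi m) hgS _ hBx ⟨x, hxm m hm⟩ rfl)) =
          RelPi.base q (Set.mem_singleton (⟨y, hymem m hm⟩ : ↥(Yi m))) :=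
        Quot.sound (relHomotopic_subtype _ _ H hHS (fun t => h0 t) (fun t => h1 t)
          (fun s t ht hp => Subtype.ext (hA s t ht)) (fun s t ht => hJ s t ht))
      obtain ⟨am, ham⟩ := (p5m q hq _).mpr hstagebase
      have hmape : Set.MapsTo (stageFiberIncl f (Yi m) ⟨y, hymem m hm⟩)
          {fiberPt (restrictMap f (Yi m)) (hxfib m hm)} {fiberPt f hx} :=
        fun a ha => by rw [Set.mem_singleton_iff] at ha ⊢; rw [ha]; exact Subtype.ext rfl
      have hpte : stageFiberIncl f (Yi m) ⟨y, hymem m hm⟩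
          (fiberPt (restrictMap f (Yi m)) (hxfib m hm)) = fiberPt f hx := Subtype.ext rfl
      have hmapi : Set.MapsTo (fiberIncl f y) {fiberPt f hx} ({x} : Set X) :=
        fun a ha => by rw [Set.mem_singleton_iff] at ha ⊢; rw [ha]; rfl
      have hmapi2 : Set.MapsTo (fiberIncl (restrictMap f (Yi m)) ⟨y, hymem m hm⟩)
          {fiberPt (restrictMap f (Yi m)) (hxfib m hm)}
          ({(⟨x, hxm m hm⟩ : ↥(f ⁻¹' Yi m))} : Set ↥(f ⁻¹' Yi m)) :=
        fun a ha => by rw [Set.mem_singleton_iff] at ha ⊢; rw [ha]; rfl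
      have hmapX : Set.MapsTo (Subtype.val : ↥(f ⁻¹' Yi m) → X)
          ({(⟨x, hxm m hm⟩ : ↥(f ⁻¹' Yi m))} : Set ↥(f ⁻¹' Yi m)) ({x} : Set X) :=
        fun a ha => by rw [Set.mem_singleton_iff] at ha ⊢; rw [ha]
      have hmapmid : Set.MapsTo
          (⟨fun a => (a.1.1 : X), continuous_subtype_val.comp continuous_subtype_val⟩ :
            C(↥(fiber (restrictMap f (Yi m)) ⟨y, hymem m hm⟩), X))
          {fiberPt (restrictMap f (Yi m)) (hxfib m hm)} ({x} : Set X) :=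
        fun a ha => by rw [Set.mem_singleton_iff] at ha ⊢; rw [ha]; exact rfl
      have nat : iStar f hx q
            (RelPi.map (stageFiberIncl f (Yi m) ⟨y, hymem m hm⟩) hmape hpte am) =
          RelPi.map (⟨Subtype.val, continuous_subtype_val⟩ : C(↥(f ⁻¹' Yi m), X)) hmapX rfl
            (iStar (restrictMap f (Yi m)) (hxfib m hm) q am) :=
        (relPi_map_map_eq (stageFiberIncl f (Yi m) ⟨y, hymem m hm⟩) (fiberIncl f y)
          (⟨fun a => (a.1.1 : X), continuous_subtype_val.comp continuous_subtype_val⟩ :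
            C(↥(fiber (restrictMap f (Yi m)) ⟨y, hymem m hm⟩), X))
          hmape hpte hmapi rfl hmapmid rfl (fun _ => rfl) am).trans
        (relPi_map_map_eq (fiberIncl (restrictMap f (Yi m)) ⟨y, hymem m hm⟩)
          (⟨Subtype.val, continuous_subtype_val⟩ : C(↥(f ⁻¹' Yi m), X))
          (⟨fun a => (a.1.1 : X), continuous_subtype_val.comp continuous_subtype_val⟩ :
            C(↥(fiber (restrictMap f (Yi m)) ⟨y, hymem m hm⟩), X))
          hmapi2 rfl hmapX rfl hmapmid rfl (fun _ => rfl) am).symm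
      refine ⟨RelPi.map (stageFiberIncl f (Yi m) ⟨y, hymem m hm⟩) hmape hpte am, ?_⟩
      rw [nat, ham]
      exact restrict_push g (f ⁻¹' Yi m) hgS _ hBx ⟨x, hxm m hm⟩ rfl hmapX
  · -- p6 : exactness fStarAbs / d
    intro q hq b
    constructor
    · rintro ⟨a, ha⟩
      rw [← ha]
      show globalD f hx q (fStarAbs f hx (q + 1) a) =
        RelPi.base q (Set.mem_singleton (fiberPt f hx))
      have hb : ∃ α : RelPi (q + 1) X (fiber f y) x,
          fStarRel f hx (q + 1) α = fStarAbs f hx (q + 1) a := ⟨jStar f hx (q + 1) a, hfj _ a⟩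
      unfold globalD
      rw [dif_pos hb,
        hwd q hq hb.choose (jStar f hx (q + 1) a) (hb.choose_spec.trans (hfj _ a).symm), hbj q a]
      exact rfl
    · intro hd
      replace hd : globalD f hx q b = RelPi.base q (Set.mem_singleton (fiberPt f hx)) := hd
      by_cases hb : ∃ α : RelPi (q + 1) X (fiber f y) x, fStarRel f hx (q + 1) α = b
      · -- `b` is in the image of the relative `f_*`
        unfold globalD at hd
        rw [dif_pos hb] at hd
        obtain ⟨α, hα⟩ := hb
        have hdα : RelPi.boundary hx α = RelPi.base q (Set.mem_singleton (fiberPt f hx)) := by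
          rw [← hwd q hq (⟨α, hα⟩ : ∃ α, fStarRel f hx (q + 1) α = b).choose α
            ((⟨α, hα⟩ : ∃ α, fStarRel f hx (q + 1) α = b).choose_spec.trans hα.symm)]
          exact hd
        clear hd
        induction α using Quot.ind with | _ g => ?_
        obtain ⟨m, hm, hKm⟩ := hcpt (Set.range (f.comp g.toFun))
          (isCompact_range (f.comp g.toFun).continuous)
        have hgS : ∀ t, g.toFun t ∈ f ⁻¹' Yi m := fun t => hKm ⟨t, rfl⟩
        have hB : ∀ w (hw : w ∈ f ⁻¹' Yi m), w ∈ fiber f y →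
            (⟨w, hw⟩ : ↥(f ⁻¹' Yi m)) ∈ fiber (restrictMap f (Yi m)) ⟨y, hymem m hm⟩ :=
          fun w hw hwA => Subtype.ext hwA
        obtain ⟨d0m, dm, p1m, p2m, p3m, p4m, p5m, p6m, p7m, p8m, p9m, p10m, p11m, p12m, p13m⟩ :=
          hstage m hm (⟨x, hxm m hm⟩ : ↥(f ⁻¹' Yi m)) (hxfib m hm)
        have hmape : Set.MapsTo (stageFiberIncl f (Yi m) ⟨y, hymem m hm⟩) {(fiberPt (restrictMap f (Yi m)) (hxfib m hm))} {fiberPt f hx} :=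
          fun a ha => by rw [Set.mem_singleton_iff] at ha ⊢; rw [ha]; exact Subtype.ext rfl
        have hpte : (stageFiberIncl f (Yi m) ⟨y, hymem m hm⟩) (fiberPt (restrictMap f (Yi m)) (hxfib m hm)) = fiberPt f hx := Subtype.ext rfl
        have hmapp : Set.MapsTo (stageFiberProj f (Yi m) ⟨y, hymem m hm⟩) {fiberPt f hx} {(fiberPt (restrictMap f (Yi m)) (hxfib m hm))} :=
          fun a ha => by
            rw [Set.mem_singleton_iff] at ha ⊢; rw [ha]; exact Subtype.ext (Subtype.ext rfl)
        have hptp : (stageFiberProj f (Yi m) ⟨y, hymem m hm⟩) (fiberPt f hx) = (fiberPt (restrictMap f (Yi m)) (hxfib m hm)) := Subtype.ext (Subtype.ext rfl)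
        have hmapX : Set.MapsTo (Subtype.val : ↥(f ⁻¹' Yi m) → X)
            ({(⟨x, hxm m hm⟩ : ↥(f ⁻¹' Yi m))} : Set ↥(f ⁻¹' Yi m)) ({x} : Set X) :=
          fun a ha => by rw [Set.mem_singleton_iff] at ha ⊢; rw [ha]
        have hmapY : Set.MapsTo (Subtype.val : ↥(Yi m) → Y)
            ({(⟨y, hymem m hm⟩ : ↥(Yi m))} : Set ↥(Yi m)) ({y} : Set Y) :=
          fun a ha => by rw [Set.mem_singleton_iff] at ha ⊢; rw [ha]
        have hmapf : Set.MapsTo f ({x} : Set X) ({y} : Set Y) :=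
          fun a ha => by rw [Set.mem_singleton_iff] at ha ⊢; rw [ha]; exact hfx
        have hmapfm : Set.MapsTo (restrictMap f (Yi m)) ({(⟨x, hxm m hm⟩ : ↥(f ⁻¹' Yi m))} : Set ↥(f ⁻¹' Yi m))
            ({(⟨y, hymem m hm⟩ : ↥(Yi m))} : Set ↥(Yi m)) :=
          fun a ha => by rw [Set.mem_singleton_iff] at ha ⊢; rw [ha]; exact Subtype.ext hfx
        have hmapmidF : Set.MapsTo (⟨fun a => f a.1, f.continuous.comp continuous_subtype_val⟩ : C(↥(f ⁻¹' Yi m), Y)) ({(⟨x, hxm m hm⟩ : ↥(f ⁻¹' Yi m))} : Set ↥(f ⁻¹' Yi m)) ({y} : Set Y) :=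
          fun a ha => by rw [Set.mem_singleton_iff] at ha ⊢; rw [ha]; exact hfx
        have natAbs : ∀ cc, fStarAbs f hx (q + 1) (RelPi.map (⟨Subtype.val, continuous_subtype_val⟩ : C(↥(f ⁻¹' Yi m), X)) hmapX rfl cc) =
            RelPi.map (⟨Subtype.val, continuous_subtype_val⟩ : C(↥(Yi m), Y)) hmapY rfl (fStarAbs (restrictMap f (Yi m)) (hxfib m hm) (q + 1) cc) :=
          fun cc => (relPi_map_map_eq (⟨Subtype.val, continuous_subtype_val⟩ : C(↥(f ⁻¹' Yi m), X)) f (⟨fun a => f a.1, f.continuous.comp continuous_subtype_val⟩ : C(↥(f ⁻¹' Yi m), Y))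
              hmapX rfl hmapf hfx hmapmidF hfx (fun _ => rfl) cc).trans
            (relPi_map_map_eq (restrictMap f (Yi m)) (⟨Subtype.val, continuous_subtype_val⟩ : C(↥(Yi m), Y)) (⟨fun a => f a.1, f.continuous.comp continuous_subtype_val⟩ : C(↥(f ⁻¹' Yi m), Y))
              hmapfm (hxfib m hm) hmapY rfl hmapmidF hfx (fun _ => rfl) cc).symm
        have hpb : RelPi.map (stageFiberProj f (Yi m) ⟨y, hymem m hm⟩) hmapp hptp (RelPi.boundary hx (Quot.mk RelHomotopic g)) =
            RelPi.boundary (hxfib m hm)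
              (Quot.mk RelHomotopic (restrictRelLoop g (f ⁻¹' Yi m) hgS _ hB (⟨x, hxm m hm⟩ : ↥(f ⁻¹' Yi m)) rfl)) :=
          congrArg (Quot.mk _) (relLoop_eq _ _ fun t => Subtype.ext (Subtype.ext rfl))
        have hstb : RelPi.boundary (hxfib m hm)
              (Quot.mk RelHomotopic (restrictRelLoop g (f ⁻¹' Yi m) hgS _ hB (⟨x, hxm m hm⟩ : ↥(f ⁻¹' Yi m)) rfl)) =
            RelPi.base q (Set.mem_singleton (fiberPt (restrictMap f (Yi m)) (hxfib m hm))) := by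
          rw [← hpb, hdα]
          exact relPi_map_base (stageFiberProj f (Yi m) ⟨y, hymem m hm⟩) hmapp hptp _ _
        have hD := p12m q hq
          (Quot.mk RelHomotopic (restrictRelLoop g (f ⁻¹' Yi m) hgS _ hB (⟨x, hxm m hm⟩ : ↥(f ⁻¹' Yi m)) rfl))
        obtain ⟨am, ham⟩ := (p6m q hq _).mpr (hD.trans hstb)
        refine ⟨RelPi.map (⟨Subtype.val, continuous_subtype_val⟩ : C(↥(f ⁻¹' Yi m), X)) hmapX rfl am, ?_⟩
        have natRel : RelPi.map (⟨Subtype.val, continuous_subtype_val⟩ : C(↥(Yi m), Y)) hmapY rfl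
              (fStarRel (restrictMap f (Yi m)) (hxfib m hm) (q + 1)
                (Quot.mk RelHomotopic (restrictRelLoop g (f ⁻¹' Yi m) hgS _ hB (⟨x, hxm m hm⟩ : ↥(f ⁻¹' Yi m)) rfl))) =
            fStarRel f hx (q + 1) (Quot.mk RelHomotopic g) :=
          congrArg (Quot.mk _) (relLoop_eq _ _ fun t => rfl)
        rw [natAbs, ham, natRel]
        exact hα
      · by_cases hc : ∃ c : RelPi q ↥(fiber f y) {fiberPt f hx} (fiberPt f hx),
            iStar f hx q c = RelPi.base q (Set.mem_singleton x) ∧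
            c ≠ RelPi.base q (Set.mem_singleton (fiberPt f hx))
        · exfalso
          unfold globalD at hd
          rw [dif_neg hb, dif_pos hc] at hd
          exact hc.choose_spec.2 hd
        · clear hd
          induction b using Quot.ind with | _ gb => ?_
          obtain ⟨m, hm, hKm⟩ := hcpt (Set.range gb.toFun) (isCompact_range gb.toFun.continuous)
          have hgS : ∀ t, gb.toFun t ∈ Yi m := fun t => hKm ⟨t, rfl⟩
          have hBy : ∀ w (hw : w ∈ Yi m), w ∈ ({y} : Set Y) →
              (⟨w, hw⟩ : ↥(Yi m)) ∈ ({(⟨y, hymem m hm⟩ : ↥(Yi m))} : Set ↥(Yi m)) :=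
            fun w hw hwA => by rw [Set.mem_singleton_iff] at hwA ⊢; exact Subtype.ext hwA
          obtain ⟨d0m, dm, p1m, p2m, p3m, p4m, p5m, p6m, p7m, p8m, p9m, p10m, p11m, p12m, p13m⟩ :=
            hstage m hm (⟨x, hxm m hm⟩ : ↥(f ⁻¹' Yi m)) (hxfib m hm)
          have hmape : Set.MapsTo (stageFiberIncl f (Yi m) ⟨y, hymem m hm⟩) {(fiberPt (restrictMap f (Yi m)) (hxfib m hm))} {fiberPt f hx} :=
            fun a ha => by rw [Set.mem_singleton_iff] at ha ⊢; rw [ha]; exact Subtype.ext rfl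
          have hpte : (stageFiberIncl f (Yi m) ⟨y, hymem m hm⟩) (fiberPt (restrictMap f (Yi m)) (hxfib m hm)) = fiberPt f hx := Subtype.ext rfl
          have hmapp : Set.MapsTo (stageFiberProj f (Yi m) ⟨y, hymem m hm⟩) {fiberPt f hx} {(fiberPt (restrictMap f (Yi m)) (hxfib m hm))} :=
            fun a ha => by
              rw [Set.mem_singleton_iff] at ha ⊢; rw [ha]; exact Subtype.ext (Subtype.ext rfl)
          have hptp : (stageFiberProj f (Yi m) ⟨y, hymem m hm⟩) (fiberPt f hx) = (fiberPt (restrictMap f (Yi m)) (hxfib m hm)) := Subtype.ext (Subtype.ext rfl)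
          have hmapX : Set.MapsTo (Subtype.val : ↥(f ⁻¹' Yi m) → X)
              ({(⟨x, hxm m hm⟩ : ↥(f ⁻¹' Yi m))} : Set ↥(f ⁻¹' Yi m)) ({x} : Set X) :=
            fun a ha => by rw [Set.mem_singleton_iff] at ha ⊢; rw [ha]
          have hmapY : Set.MapsTo (Subtype.val : ↥(Yi m) → Y)
              ({(⟨y, hymem m hm⟩ : ↥(Yi m))} : Set ↥(Yi m)) ({y} : Set Y) :=
            fun a ha => by rw [Set.mem_singleton_iff] at ha ⊢; rw [ha]
          have hmapf : Set.MapsTo f ({x} : Set X) ({y} : Set Y) :=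
            fun a ha => by rw [Set.mem_singleton_iff] at ha ⊢; rw [ha]; exact hfx
          have hmapfm : Set.MapsTo (restrictMap f (Yi m)) ({(⟨x, hxm m hm⟩ : ↥(f ⁻¹' Yi m))} : Set ↥(f ⁻¹' Yi m))
              ({(⟨y, hymem m hm⟩ : ↥(Yi m))} : Set ↥(Yi m)) :=
            fun a ha => by rw [Set.mem_singleton_iff] at ha ⊢; rw [ha]; exact Subtype.ext hfx
          have hmapmidF : Set.MapsTo (⟨fun a => f a.1, f.continuous.comp continuous_subtype_val⟩ : C(↥(f ⁻¹' Yi m), Y)) ({(⟨x, hxm m hm⟩ : ↥(f ⁻¹' Yi m))} : Set ↥(f ⁻¹' Yi m)) ({y} : Set Y) :=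
            fun a ha => by rw [Set.mem_singleton_iff] at ha ⊢; rw [ha]; exact hfx
          have natAbs : ∀ cc, fStarAbs f hx (q + 1) (RelPi.map (⟨Subtype.val, continuous_subtype_val⟩ : C(↥(f ⁻¹' Yi m), X)) hmapX rfl cc) =
              RelPi.map (⟨Subtype.val, continuous_subtype_val⟩ : C(↥(Yi m), Y)) hmapY rfl (fStarAbs (restrictMap f (Yi m)) (hxfib m hm) (q + 1) cc) :=
            fun cc => (relPi_map_map_eq (⟨Subtype.val, continuous_subtype_val⟩ : C(↥(f ⁻¹' Yi m), X)) f (⟨fun a => f a.1, f.continuous.comp continuous_subtype_val⟩ : C(↥(f ⁻¹' Yi m), Y))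
                hmapX rfl hmapf hfx hmapmidF hfx (fun _ => rfl) cc).trans
              (relPi_map_map_eq (restrictMap f (Yi m)) (⟨Subtype.val, continuous_subtype_val⟩ : C(↥(Yi m), Y)) (⟨fun a => f a.1, f.continuous.comp continuous_subtype_val⟩ : C(↥(f ⁻¹' Yi m), Y))
                hmapfm (hxfib m hm) hmapY rfl hmapmidF hfx (fun _ => rfl) cc).symm
          have hcm := (p8m q hq (dm q hq
            (Quot.mk RelHomotopic (restrictRelLoop gb (Yi m) hgS _ hBy ⟨y, hymem m hm⟩ rfl)))).mp
            ⟨Quot.mk RelHomotopic (restrictRelLoop gb (Yi m) hgS _ hBy ⟨y, hymem m hm⟩ rfl), rfl⟩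
          have natI : ∀ cc, iStar f hx q (RelPi.map (stageFiberIncl f (Yi m) ⟨y, hymem m hm⟩) hmape hpte cc) =
              RelPi.map (⟨Subtype.val, continuous_subtype_val⟩ : C(↥(f ⁻¹' Yi m), X)) hmapX rfl (iStar (restrictMap f (Yi m)) (hxfib m hm) q cc) := by
            intro cc
            refine (relPi_map_map_eq (stageFiberIncl f (Yi m) ⟨y, hymem m hm⟩) (fiberIncl f y)
              (⟨fun a => (a.1.1 : X), continuous_subtype_val.comp continuous_subtype_val⟩ :
                C(↥(fiber (restrictMap f (Yi m)) ⟨y, hymem m hm⟩), X))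
              hmape hpte (fun a ha => by rw [Set.mem_singleton_iff] at ha ⊢; rw [ha]; rfl) rfl
              (fun a ha => by rw [Set.mem_singleton_iff] at ha ⊢; rw [ha]; exact rfl) rfl
              (fun _ => rfl) cc).trans
              (relPi_map_map_eq (fiberIncl (restrictMap f (Yi m)) ⟨y, hymem m hm⟩) (⟨Subtype.val, continuous_subtype_val⟩ : C(↥(f ⁻¹' Yi m), X))
              (⟨fun a => (a.1.1 : X), continuous_subtype_val.comp continuous_subtype_val⟩ :
                C(↥(fiber (restrictMap f (Yi m)) ⟨y, hymem m hm⟩), X))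
              (fun a ha => by rw [Set.mem_singleton_iff] at ha ⊢; rw [ha]; rfl) rfl
              hmapX rfl
              (fun a ha => by rw [Set.mem_singleton_iff] at ha ⊢; rw [ha]; exact rfl) rfl
              (fun _ => rfl) cc).symm
          have hpushI : iStar f hx q (RelPi.map (stageFiberIncl f (Yi m) ⟨y, hymem m hm⟩) hmape hpte (dm q hq
                (Quot.mk RelHomotopic (restrictRelLoop gb (Yi m) hgS _ hBy ⟨y, hymem m hm⟩ rfl)))) =
              RelPi.base q (Set.mem_singleton x) := by
            rw [natI, hcm]
            exact relPi_map_base (⟨Subtype.val, continuous_subtype_val⟩ : C(↥(f ⁻¹' Yi m), X)) hmapX rfl _ _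
          have hcbase : RelPi.map (stageFiberIncl f (Yi m) ⟨y, hymem m hm⟩) hmape hpte (dm q hq
                (Quot.mk RelHomotopic (restrictRelLoop gb (Yi m) hgS _ hBy ⟨y, hymem m hm⟩ rfl))) =
              RelPi.base q (Set.mem_singleton (fiberPt f hx)) := by
            by_contra hne
            exact hc ⟨_, hpushI, hne⟩
          have hmbase : dm q hq
                (Quot.mk RelHomotopic (restrictRelLoop gb (Yi m) hgS _ hBy ⟨y, hymem m hm⟩ rfl)) =
              RelPi.base q (Set.mem_singleton (fiberPt (restrictMap f (Yi m)) (hxfib m hm))) := by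
            have hcb := congrArg (RelPi.map (stageFiberProj f (Yi m) ⟨y, hymem m hm⟩) hmapp hptp) hcbase
            rw [relPi_map_map_self (stageFiberIncl f (Yi m) ⟨y, hymem m hm⟩) (stageFiberProj f (Yi m) ⟨y, hymem m hm⟩) hmape hpte hmapp hptp
              (fun a => Subtype.ext (Subtype.ext rfl))] at hcb
            rw [hcb]
            exact relPi_map_base (stageFiberProj f (Yi m) ⟨y, hymem m hm⟩) hmapp hptp _ _
          obtain ⟨am, ham⟩ := (p6m q hq _).mpr hmbase
          refine ⟨RelPi.map (⟨Subtype.val, continuous_subtype_val⟩ : C(↥(f ⁻¹' Yi m), X)) hmapX rfl am, ?_⟩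
          rw [natAbs, ham]
          exact restrict_push gb (Yi m) hgS _ hBy ⟨y, hymem m hm⟩ rfl hmapY
  · -- p7 : exactness fStarAbs / d0
    intro hk b
    constructor
    · rintro ⟨a, ha⟩
      rw [← ha]
      show globalD0 f hx (fStarAbs f hx 0 a) = Pi0.mk (fiberPt f hx)
      have hb : ∃ α : RelPi 0 X (fiber f y) x,
          fStarRel f hx 0 α = fStarAbs f hx 0 a := ⟨jStar f hx 0 a, hfj _ a⟩
      unfold globalD0
      rw [dif_pos hb,
        hwd0 hk hb.choose (jStar f hx 0 a) (hb.choose_spec.trans (hfj _ a).symm), hbj0 a]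
    · intro hd
      replace hd : globalD0 f hx b = Pi0.mk (fiberPt f hx) := hd
      by_cases hb : ∃ α : RelPi 0 X (fiber f y) x, fStarRel f hx 0 α = b
      · unfold globalD0 at hd
        rw [dif_pos hb] at hd
        obtain ⟨α, hα⟩ := hb
        have hdα : RelPi.boundary0 α = Pi0.mk (fiberPt f hx) := by
          rw [← hwd0 hk (⟨α, hα⟩ : ∃ α, fStarRel f hx 0 α = b).choose α
            ((⟨α, hα⟩ : ∃ α, fStarRel f hx 0 α = b).choose_spec.trans hα.symm)]
          exact hd
        clear hd
        induction α using Quot.ind with | _ g => ?_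
        obtain ⟨m, hm, hKm⟩ := hcpt (Set.range (f.comp g.toFun))
          (isCompact_range (f.comp g.toFun).continuous)
        have hgS : ∀ t, g.toFun t ∈ f ⁻¹' Yi m := fun t => hKm ⟨t, rfl⟩
        have hB : ∀ w (hw : w ∈ f ⁻¹' Yi m), w ∈ fiber f y →
            (⟨w, hw⟩ : ↥(f ⁻¹' Yi m)) ∈ fiber (restrictMap f (Yi m)) ⟨y, hymem m hm⟩ :=
          fun w hw hwA => Subtype.ext hwA
        obtain ⟨d0m, dm, p1m, p2m, p3m, p4m, p5m, p6m, p7m, p8m, p9m, p10m, p11m, p12m, p13m⟩ :=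
          hstage m hm (⟨x, hxm m hm⟩ : ↥(f ⁻¹' Yi m)) (hxfib m hm)
        have hmape : Set.MapsTo (stageFiberIncl f (Yi m) ⟨y, hymem m hm⟩) {(fiberPt (restrictMap f (Yi m)) (hxfib m hm))} {fiberPt f hx} :=
          fun a ha => by rw [Set.mem_singleton_iff] at ha ⊢; rw [ha]; exact Subtype.ext rfl
        have hpte : (stageFiberIncl f (Yi m) ⟨y, hymem m hm⟩) (fiberPt (restrictMap f (Yi m)) (hxfib m hm)) = fiberPt f hx := Subtype.ext rfl
        have hmapp : Set.MapsTo (stageFiberProj f (Yi m) ⟨y, hymem m hm⟩) {fiberPt f hx} {(fiberPt (restrictMap f (Yi m)) (hxfib m hm))} :=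
          fun a ha => by
            rw [Set.mem_singleton_iff] at ha ⊢; rw [ha]; exact Subtype.ext (Subtype.ext rfl)
        have hptp : (stageFiberProj f (Yi m) ⟨y, hymem m hm⟩) (fiberPt f hx) = (fiberPt (restrictMap f (Yi m)) (hxfib m hm)) := Subtype.ext (Subtype.ext rfl)
        have hmapX : Set.MapsTo (Subtype.val : ↥(f ⁻¹' Yi m) → X)
            ({(⟨x, hxm m hm⟩ : ↥(f ⁻¹' Yi m))} : Set ↥(f ⁻¹' Yi m)) ({x} : Set X) :=
          fun a ha => by rw [Set.mem_singleton_iff] at ha ⊢; rw [ha]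
        have hmapY : Set.MapsTo (Subtype.val : ↥(Yi m) → Y)
            ({(⟨y, hymem m hm⟩ : ↥(Yi m))} : Set ↥(Yi m)) ({y} : Set Y) :=
          fun a ha => by rw [Set.mem_singleton_iff] at ha ⊢; rw [ha]
        have hmapf : Set.MapsTo f ({x} : Set X) ({y} : Set Y) :=
          fun a ha => by rw [Set.mem_singleton_iff] at ha ⊢; rw [ha]; exact hfx
        have hmapfm : Set.MapsTo (restrictMap f (Yi m)) ({(⟨x, hxm m hm⟩ : ↥(f ⁻¹' Yi m))} : Set ↥(f ⁻¹' Yi m))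
            ({(⟨y, hymem m hm⟩ : ↥(Yi m))} : Set ↥(Yi m)) :=
          fun a ha => by rw [Set.mem_singleton_iff] at ha ⊢; rw [ha]; exact (hxfib m hm)
        have hmapmidF : Set.MapsTo (⟨fun a => f a.1, f.continuous.comp continuous_subtype_val⟩ : C(↥(f ⁻¹' Yi m), Y)) ({(⟨x, hxm m hm⟩ : ↥(f ⁻¹' Yi m))} : Set ↥(f ⁻¹' Yi m)) ({y} : Set Y) :=
          fun a ha => by rw [Set.mem_singleton_iff] at ha ⊢; rw [ha]; exact hfx
        have natAbs : ∀ cc, fStarAbs f hx 0 (RelPi.map (⟨Subtype.val, continuous_subtype_val⟩ : C(↥(f ⁻¹' Yi m), X)) hmapX rfl cc) =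
            RelPi.map (⟨Subtype.val, continuous_subtype_val⟩ : C(↥(Yi m), Y)) hmapY rfl (fStarAbs (restrictMap f (Yi m)) (hxfib m hm) 0 cc) :=
          fun cc => (relPi_map_map_eq (⟨Subtype.val, continuous_subtype_val⟩ : C(↥(f ⁻¹' Yi m), X)) f (⟨fun a => f a.1, f.continuous.comp continuous_subtype_val⟩ : C(↥(f ⁻¹' Yi m), Y))
              hmapX rfl hmapf hfx hmapmidF hfx (fun _ => rfl) cc).trans
            (relPi_map_map_eq (restrictMap f (Yi m)) (⟨Subtype.val, continuous_subtype_val⟩ : C(↥(Yi m), Y)) (⟨fun a => f a.1, f.continuous.comp continuous_subtype_val⟩ : C(↥(f ⁻¹' Yi m), Y))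
              hmapfm (hxfib m hm) hmapY rfl hmapmidF hfx (fun _ => rfl) cc).symm
        have hpb : Pi0.map (stageFiberProj f (Yi m) ⟨y, hymem m hm⟩) (RelPi.boundary0 (Quot.mk RelHomotopic g)) =
            RelPi.boundary0
              (Quot.mk RelHomotopic (restrictRelLoop g (f ⁻¹' Yi m) hgS _ hB (⟨x, hxm m hm⟩ : ↥(f ⁻¹' Yi m)) rfl)) :=
          congrArg Pi0.mk (Subtype.ext (Subtype.ext rfl))
        have hstb : RelPi.boundary0
              (Quot.mk RelHomotopic (restrictRelLoop g (f ⁻¹' Yi m) hgS _ hB (⟨x, hxm m hm⟩ : ↥(f ⁻¹' Yi m)) rfl)) =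
            Pi0.mk (fiberPt (restrictMap f (Yi m)) (hxfib m hm)) := by
          rw [← hpb, hdα]
          exact congrArg Pi0.mk hptp
        have hD := p13m hk
          (Quot.mk RelHomotopic (restrictRelLoop g (f ⁻¹' Yi m) hgS _ hB (⟨x, hxm m hm⟩ : ↥(f ⁻¹' Yi m)) rfl))
        obtain ⟨am, ham⟩ := (p7m hk _).mpr (hD.trans hstb)
        refine ⟨RelPi.map (⟨Subtype.val, continuous_subtype_val⟩ : C(↥(f ⁻¹' Yi m), X)) hmapX rfl am, ?_⟩
        have natRel : RelPi.map (⟨Subtype.val, continuous_subtype_val⟩ : C(↥(Yi m), Y)) hmapY rfl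
              (fStarRel (restrictMap f (Yi m)) (hxfib m hm) 0
                (Quot.mk RelHomotopic (restrictRelLoop g (f ⁻¹' Yi m) hgS _ hB (⟨x, hxm m hm⟩ : ↥(f ⁻¹' Yi m)) rfl))) =
            fStarRel f hx 0 (Quot.mk RelHomotopic g) :=
          congrArg (Quot.mk _) (relLoop_eq _ _ fun t => rfl)
        rw [natAbs, ham, natRel]
        exact hα
      · by_cases hc : ∃ c : Pi0 ↥(fiber f y),
            iStar0 f y c = Pi0.mk x ∧ c ≠ Pi0.mk (fiberPt f hx)
        · exfalso
          unfold globalD0 at hd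
          rw [dif_neg hb, dif_pos hc] at hd
          exact hc.choose_spec.2 hd
        · clear hd
          induction b using Quot.ind with | _ gb => ?_
          obtain ⟨m, hm, hKm⟩ := hcpt (Set.range gb.toFun) (isCompact_range gb.toFun.continuous)
          have hgS : ∀ t, gb.toFun t ∈ Yi m := fun t => hKm ⟨t, rfl⟩
          have hBy : ∀ w (hw : w ∈ Yi m), w ∈ ({y} : Set Y) →
              (⟨w, hw⟩ : ↥(Yi m)) ∈ ({(⟨y, hymem m hm⟩ : ↥(Yi m))} : Set ↥(Yi m)) :=
            fun w hw hwA => by rw [Set.mem_singleton_iff] at hwA ⊢; exact Subtype.ext hwA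
          obtain ⟨d0m, dm, p1m, p2m, p3m, p4m, p5m, p6m, p7m, p8m, p9m, p10m, p11m, p12m, p13m⟩ :=
            hstage m hm (⟨x, hxm m hm⟩ : ↥(f ⁻¹' Yi m)) (hxfib m hm)
          have hmape : Set.MapsTo (stageFiberIncl f (Yi m) ⟨y, hymem m hm⟩) {(fiberPt (restrictMap f (Yi m)) (hxfib m hm))} {fiberPt f hx} :=
            fun a ha => by rw [Set.mem_singleton_iff] at ha ⊢; rw [ha]; exact Subtype.ext rfl
          have hpte : (stageFiberIncl f (Yi m) ⟨y, hymem m hm⟩) (fiberPt (restrictMap f (Yi m)) (hxfib m hm)) = fiberPt f hx := Subtype.ext rfl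
          have hmapp : Set.MapsTo (stageFiberProj f (Yi m) ⟨y, hymem m hm⟩) {fiberPt f hx} {(fiberPt (restrictMap f (Yi m)) (hxfib m hm))} :=
            fun a ha => by
              rw [Set.mem_singleton_iff] at ha ⊢; rw [ha]; exact Subtype.ext (Subtype.ext rfl)
          have hptp : (stageFiberProj f (Yi m) ⟨y, hymem m hm⟩) (fiberPt f hx) = (fiberPt (restrictMap f (Yi m)) (hxfib m hm)) := Subtype.ext (Subtype.ext rfl)
          have hmapX : Set.MapsTo (Subtype.val : ↥(f ⁻¹' Yi m) → X)
              ({(⟨x, hxm m hm⟩ : ↥(f ⁻¹' Yi m))} : Set ↥(f ⁻¹' Yi m)) ({x} : Set X) :=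
            fun a ha => by rw [Set.mem_singleton_iff] at ha ⊢; rw [ha]
          have hmapY : Set.MapsTo (Subtype.val : ↥(Yi m) → Y)
              ({(⟨y, hymem m hm⟩ : ↥(Yi m))} : Set ↥(Yi m)) ({y} : Set Y) :=
            fun a ha => by rw [Set.mem_singleton_iff] at ha ⊢; rw [ha]
          have hmapf : Set.MapsTo f ({x} : Set X) ({y} : Set Y) :=
            fun a ha => by rw [Set.mem_singleton_iff] at ha ⊢; rw [ha]; exact hfx
          have hmapfm : Set.MapsTo (restrictMap f (Yi m)) ({(⟨x, hxm m hm⟩ : ↥(f ⁻¹' Yi m))} : Set ↥(f ⁻¹' Yi m))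
              ({(⟨y, hymem m hm⟩ : ↥(Yi m))} : Set ↥(Yi m)) :=
            fun a ha => by rw [Set.mem_singleton_iff] at ha ⊢; rw [ha]; exact (hxfib m hm)
          have hmapmidF : Set.MapsTo (⟨fun a => f a.1, f.continuous.comp continuous_subtype_val⟩ : C(↥(f ⁻¹' Yi m), Y)) ({(⟨x, hxm m hm⟩ : ↥(f ⁻¹' Yi m))} : Set ↥(f ⁻¹' Yi m)) ({y} : Set Y) :=
            fun a ha => by rw [Set.mem_singleton_iff] at ha ⊢; rw [ha]; exact hfx
          have natAbs : ∀ cc, fStarAbs f hx 0 (RelPi.map (⟨Subtype.val, continuous_subtype_val⟩ : C(↥(f ⁻¹' Yi m), X)) hmapX rfl cc) =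
              RelPi.map (⟨Subtype.val, continuous_subtype_val⟩ : C(↥(Yi m), Y)) hmapY rfl (fStarAbs (restrictMap f (Yi m)) (hxfib m hm) 0 cc) :=
            fun cc => (relPi_map_map_eq (⟨Subtype.val, continuous_subtype_val⟩ : C(↥(f ⁻¹' Yi m), X)) f (⟨fun a => f a.1, f.continuous.comp continuous_subtype_val⟩ : C(↥(f ⁻¹' Yi m), Y))
                hmapX rfl hmapf hfx hmapmidF hfx (fun _ => rfl) cc).trans
              (relPi_map_map_eq (restrictMap f (Yi m)) (⟨Subtype.val, continuous_subtype_val⟩ : C(↥(Yi m), Y)) (⟨fun a => f a.1, f.continuous.comp continuous_subtype_val⟩ : C(↥(f ⁻¹' Yi m), Y))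
                hmapfm (hxfib m hm) hmapY rfl hmapmidF hfx (fun _ => rfl) cc).symm
          have natI0 : ∀ cc, iStar0 f y (Pi0.map (stageFiberIncl f (Yi m) ⟨y, hymem m hm⟩) cc) =
              Pi0.map (⟨Subtype.val, continuous_subtype_val⟩ : C(↥(f ⁻¹' Yi m), X)) (iStar0 (restrictMap f (Yi m)) ⟨y, hymem m hm⟩ cc) :=
            fun cc => (pi0_map_map_eq (stageFiberIncl f (Yi m) ⟨y, hymem m hm⟩) (fiberIncl f y) (⟨fun a => (a.1.1 : X), continuous_subtype_val.comp continuous_subtype_val⟩ :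
                      C(↥(fiber (restrictMap f (Yi m)) ⟨y, hymem m hm⟩), X)) (fun _ => rfl) cc).trans
              (pi0_map_map_eq (fiberIncl (restrictMap f (Yi m)) ⟨y, hymem m hm⟩) (⟨Subtype.val, continuous_subtype_val⟩ : C(↥(f ⁻¹' Yi m), X)) (⟨fun a => (a.1.1 : X), continuous_subtype_val.comp continuous_subtype_val⟩ :
                      C(↥(fiber (restrictMap f (Yi m)) ⟨y, hymem m hm⟩), X))
                (fun _ => rfl) cc).symm
          have hcm := (p9m hk (d0m hk
            (Quot.mk RelHomotopic (restrictRelLoop gb (Yi m) hgS _ hBy ⟨y, hymem m hm⟩ rfl)))).mp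
            ⟨Quot.mk RelHomotopic (restrictRelLoop gb (Yi m) hgS _ hBy ⟨y, hymem m hm⟩ rfl), rfl⟩
          have hpushI : iStar0 f y (Pi0.map (stageFiberIncl f (Yi m) ⟨y, hymem m hm⟩) (d0m hk
                (Quot.mk RelHomotopic (restrictRelLoop gb (Yi m) hgS _ hBy ⟨y, hymem m hm⟩ rfl)))) =
              Pi0.mk x := by
            rw [natI0, hcm]
            exact rfl
          have hcbase : Pi0.map (stageFiberIncl f (Yi m) ⟨y, hymem m hm⟩) (d0m hk
                (Quot.mk RelHomotopic (restrictRelLoop gb (Yi m) hgS _ hBy ⟨y, hymem m hm⟩ rfl))) =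
              Pi0.mk (fiberPt f hx) := by
            by_contra hne
            exact hc ⟨_, hpushI, hne⟩
          have hmbase : d0m hk
                (Quot.mk RelHomotopic (restrictRelLoop gb (Yi m) hgS _ hBy ⟨y, hymem m hm⟩ rfl)) =
              Pi0.mk (fiberPt (restrictMap f (Yi m)) (hxfib m hm)) := by
            have hcb := congrArg (Pi0.map (stageFiberProj f (Yi m) ⟨y, hymem m hm⟩)) hcbase
            rw [pi0_map_map_self (stageFiberIncl f (Yi m) ⟨y, hymem m hm⟩) (stageFiberProj f (Yi m) ⟨y, hymem m hm⟩)
              (fun a => Subtype.ext (Subtype.ext rfl))] at hcb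
            rw [hcb]
            exact congrArg Pi0.mk hptp
          obtain ⟨am, ham⟩ := (p7m hk _).mpr hmbase
          refine ⟨RelPi.map (⟨Subtype.val, continuous_subtype_val⟩ : C(↥(f ⁻¹' Yi m), X)) hmapX rfl am, ?_⟩
          rw [natAbs, ham]
          exact restrict_push gb (Yi m) hgS _ hBy ⟨y, hymem m hm⟩ rfl hmapY
  · -- p8 : exactness d / iStar
    intro q hq c
    have hmapi : Set.MapsTo (fiberIncl f y) {fiberPt f hx} ({x} : Set X) :=
      fun a ha => by rw [Set.mem_singleton_iff] at ha ⊢; rw [ha]; rfl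
    constructor
    · rintro ⟨b, hb⟩
      rw [← hb]
      show iStar f hx q (globalD f hx q b) = RelPi.base q (Set.mem_singleton x)
      unfold globalD
      by_cases hbb' : ∃ α : RelPi (q + 1) X (fiber f y) x, fStarRel f hx (q + 1) α = b
      · rw [dif_pos hbb']
        exact hiBd q _
      · rw [dif_neg hbb']
        by_cases hcc' : ∃ c : RelPi q ↥(fiber f y) {fiberPt f hx} (fiberPt f hx),
            iStar f hx q c = RelPi.base q (Set.mem_singleton x) ∧
            c ≠ RelPi.base q (Set.mem_singleton (fiberPt f hx))
        · rw [dif_pos hcc']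
          exact hcc'.choose_spec.1
        · rw [dif_neg hcc']
          exact relPi_map_base (fiberIncl f y) hmapi rfl _ _
    · intro hic
      induction c using Quot.ind with | _ u => ?_
      replace hic : RelHomotopic (RelLoop.map (B := ({x} : Set X)) (fiberIncl f y) hmapi rfl u)
          (RelLoop.const q (Set.mem_singleton x)) := relPi_eq_iff.mp hic
      obtain ⟨H, h0, h1, hA, hJ⟩ := hic
      refine ⟨fStarRel f hx (q + 1) (Quot.mk RelHomotopic
        (nullToRel hx u H (fun t => h0 t) (fun t => h1 t) hA hJ)), ?_⟩
      show globalD f hx q (fStarRel f hx (q + 1) (Quot.mk RelHomotopic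
        (nullToRel hx u H (fun t => h0 t) (fun t => h1 t) hA hJ))) = Quot.mk RelHomotopic u
      unfold globalD
      rw [dif_pos ⟨Quot.mk RelHomotopic
        (nullToRel hx u H (fun t => h0 t) (fun t => h1 t) hA hJ), rfl⟩]
      rw [hwd q hq _ (Quot.mk RelHomotopic
          (nullToRel hx u H (fun t => h0 t) (fun t => h1 t) hA hJ))
        (Exists.choose_spec (⟨Quot.mk RelHomotopic
          (nullToRel hx u H (fun t => h0 t) (fun t => h1 t) hA hJ), rfl⟩ :
          ∃ α : RelPi (q + 1) X (fiber f y) x, fStarRel f hx (q + 1) α =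
            fStarRel f hx (q + 1) (Quot.mk RelHomotopic
              (nullToRel hx u H (fun t => h0 t) (fun t => h1 t) hA hJ))))]
      exact boundary_nullToRel hx u H _ _ _ _
  · -- p9 : exactness d0 / iStar0
    intro hk c
    constructor
    · rintro ⟨b, hb⟩
      rw [← hb]
      show iStar0 f y (globalD0 f hx b) = Pi0.mk x
      unfold globalD0
      by_cases hbb' : ∃ α : RelPi 0 X (fiber f y) x, fStarRel f hx 0 α = b
      · rw [dif_pos hbb']
        exact hiBd0 _
      · rw [dif_neg hbb']
        by_cases hcc' : ∃ c : Pi0 ↥(fiber f y),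
            iStar0 f y c = Pi0.mk x ∧ c ≠ Pi0.mk (fiberPt f hx)
        · rw [dif_pos hcc']
          exact hcc'.choose_spec.1
        · rw [dif_neg hcc']
          exact hiBase
    · intro hic
      induction c using Quot.ind with | _ a => ?_
      replace hic : Joined (a : X) x := pi0_mk_eq_iff.mp hic
      obtain ⟨p⟩ := hic
      let hg : RelLoop 0 X (fiber f y) x := ⟨⟨fun t => p (t 0),
        p.continuous.comp (continuous_apply 0)⟩,
        fun t ht => by show p (t 0) ∈ fiber f y; rw [ht, p.source]; exact a.2,
        fun t ht => by show p (t 0) = x; rw [inJ_one ht]; exact p.target⟩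
      refine ⟨fStarRel f hx 0 (Quot.mk RelHomotopic hg), ?_⟩
      show globalD0 f hx (fStarRel f hx 0 (Quot.mk RelHomotopic hg)) = Quot.mk _ a
      unfold globalD0
      rw [dif_pos ⟨Quot.mk RelHomotopic hg, rfl⟩]
      rw [hwd0 hk _ (Quot.mk RelHomotopic hg)
        (Exists.choose_spec (⟨Quot.mk RelHomotopic hg, rfl⟩ :
          ∃ α : RelPi 0 X (fiber f y) x,
            fStarRel f hx 0 α = fStarRel f hx 0 (Quot.mk RelHomotopic hg)))]
      show Pi0.mk (⟨hg.toFun (fun _ => 0), hg.face_mem _ rfl⟩ : ↥(fiber f y)) = Pi0.mk a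
      exact congrArg Pi0.mk (Subtype.ext p.source)
  · -- p10 : exactness iStar0 / fStar0
    intro b
    constructor
    · rintro ⟨c, hc⟩
      rw [← hc]
      induction c using Quot.ind with | _ a => ?_
      show Pi0.mk (f a.1) = Pi0.mk y
      exact congrArg Pi0.mk a.2
    · intro hb
      induction b using Quot.ind with | _ x' => ?_
      replace hb : Joined (f x') y := pi0_mk_eq_iff.mp hb
      obtain ⟨p⟩ := hb
      obtain ⟨m, hm, hKm⟩ := hcpt (Set.range p.toContinuousMap)
        (isCompact_range p.continuous)
      have hpS : ∀ s, p s ∈ Yi m := fun s => hKm ⟨s, rfl⟩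
      have hx' : x' ∈ f ⁻¹' Yi m := by
        show f x' ∈ Yi m
        rw [← p.source]
        exact hpS 0
      obtain ⟨d0m, dm, p1m, p2m, p3m, p4m, p5m, p6m, p7m, p8m, p9m, p10m, p11m, p12m, p13m⟩ :=
        hstage m hm (⟨x, hxm m hm⟩ : ↥(f ⁻¹' Yi m)) (hxfib m hm)
      have hmape : Set.MapsTo (stageFiberIncl f (Yi m) ⟨y, hymem m hm⟩) {(fiberPt (restrictMap f (Yi m)) (hxfib m hm))} {fiberPt f hx} :=
        fun a ha => by rw [Set.mem_singleton_iff] at ha ⊢; rw [ha]; exact Subtype.ext rfl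
      have hpte : (stageFiberIncl f (Yi m) ⟨y, hymem m hm⟩) (fiberPt (restrictMap f (Yi m)) (hxfib m hm)) = fiberPt f hx := Subtype.ext rfl
      have hmapp : Set.MapsTo (stageFiberProj f (Yi m) ⟨y, hymem m hm⟩) {fiberPt f hx} {(fiberPt (restrictMap f (Yi m)) (hxfib m hm))} :=
        fun a ha => by
          rw [Set.mem_singleton_iff] at ha ⊢; rw [ha]; exact Subtype.ext (Subtype.ext rfl)
      have hptp : (stageFiberProj f (Yi m) ⟨y, hymem m hm⟩) (fiberPt f hx) = (fiberPt (restrictMap f (Yi m)) (hxfib m hm)) := Subtype.ext (Subtype.ext rfl)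
      have hmapX : Set.MapsTo (Subtype.val : ↥(f ⁻¹' Yi m) → X)
          ({(⟨x, hxm m hm⟩ : ↥(f ⁻¹' Yi m))} : Set ↥(f ⁻¹' Yi m)) ({x} : Set X) :=
        fun a ha => by rw [Set.mem_singleton_iff] at ha ⊢; rw [ha]
      have hmapY : Set.MapsTo (Subtype.val : ↥(Yi m) → Y)
          ({(⟨y, hymem m hm⟩ : ↥(Yi m))} : Set ↥(Yi m)) ({y} : Set Y) :=
        fun a ha => by rw [Set.mem_singleton_iff] at ha ⊢; rw [ha]
      have hmapf : Set.MapsTo f ({x} : Set X) ({y} : Set Y) :=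
        fun a ha => by rw [Set.mem_singleton_iff] at ha ⊢; rw [ha]; exact hfx
      have hmapfm : Set.MapsTo (restrictMap f (Yi m)) ({(⟨x, hxm m hm⟩ : ↥(f ⁻¹' Yi m))} : Set ↥(f ⁻¹' Yi m))
          ({(⟨y, hymem m hm⟩ : ↥(Yi m))} : Set ↥(Yi m)) :=
        fun a ha => by rw [Set.mem_singleton_iff] at ha ⊢; rw [ha]; exact (hxfib m hm)
      have hmapmidF : Set.MapsTo (⟨fun a => f a.1, f.continuous.comp continuous_subtype_val⟩ : C(↥(f ⁻¹' Yi m), Y)) ({(⟨x, hxm m hm⟩ : ↥(f ⁻¹' Yi m))} : Set ↥(f ⁻¹' Yi m)) ({y} : Set Y) :=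
        fun a ha => by rw [Set.mem_singleton_iff] at ha ⊢; rw [ha]; exact hfx
      have natI0 : ∀ cc, iStar0 f y (Pi0.map (stageFiberIncl f (Yi m) ⟨y, hymem m hm⟩) cc) =
          Pi0.map (⟨Subtype.val, continuous_subtype_val⟩ : C(↥(f ⁻¹' Yi m), X)) (iStar0 (restrictMap f (Yi m)) ⟨y, hymem m hm⟩ cc) :=
        fun cc => (pi0_map_map_eq (stageFiberIncl f (Yi m) ⟨y, hymem m hm⟩) (fiberIncl f y) (⟨fun a => (a.1.1 : X), continuous_subtype_val.comp continuous_subtype_val⟩ :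
                  C(↥(fiber (restrictMap f (Yi m)) ⟨y, hymem m hm⟩), X)) (fun _ => rfl) cc).trans
          (pi0_map_map_eq (fiberIncl (restrictMap f (Yi m)) ⟨y, hymem m hm⟩) (⟨Subtype.val, continuous_subtype_val⟩ : C(↥(f ⁻¹' Yi m), X)) (⟨fun a => (a.1.1 : X), continuous_subtype_val.comp continuous_subtype_val⟩ :
                  C(↥(fiber (restrictMap f (Yi m)) ⟨y, hymem m hm⟩), X))
            (fun _ => rfl) cc).symm
      have hsteq : fStar0 (restrictMap f (Yi m)) (Pi0.mk (⟨x', hx'⟩ : ↥(f ⁻¹' Yi m))) =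
          Pi0.mk (⟨y, hymem m hm⟩ : ↥(Yi m)) := pi0_mk_eq_iff.mpr (joined_subtype p hpS)
      obtain ⟨cm, hcm⟩ := (p10m (Pi0.mk (⟨x', hx'⟩ : ↥(f ⁻¹' Yi m)))).mpr hsteq
      refine ⟨Pi0.map (stageFiberIncl f (Yi m) ⟨y, hymem m hm⟩) cm, ?_⟩
      rw [natI0, hcm]
      exact rfl
  · -- p11 : surjectivity of fStar0
    intro b
    induction b using Quot.ind with | _ y' => ?_
    obtain ⟨x', hx'⟩ := hsurj y'
    exact ⟨Pi0.mk x', congrArg Pi0.mk hx'⟩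
  · -- p12 : Diagram 1
    intro q hq α
    show globalD f hx q (fStarRel f hx (q + 1) α) = RelPi.boundary hx α
    unfold globalD
    rw [dif_pos ⟨α, rfl⟩]
    exact hwd q hq _ α (Exists.choose_spec (⟨α, rfl⟩ :
      ∃ β : RelPi (q + 1) X (fiber f y) x,
        fStarRel f hx (q + 1) β = fStarRel f hx (q + 1) α))
  · -- p13 : Diagram 1 in degree 0
    intro hk α
    show globalD0 f hx (fStarRel f hx 0 α) = RelPi.boundary0 α
    unfold globalD0
    rw [dif_pos ⟨α, rfl⟩]
    exact hwd0 hk _ α (Exists.choose_spec (⟨α, rfl⟩ :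
      ∃ β : RelPi 0 X (fiber f y) x, fStarRel f hx 0 β = fStarRel f hx 0 α))
end
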